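/- arXiv:1704.04476 — 11 statements merged into one kernel-verified Lean document; each statement's English description precedes it below -/
import Mathlib

section
/- Every integer n ≥ 1 has exactly one q-representation; that is, there exists a unique sequence of digits ε_i ∈ {0,1} (i ≥ 0), all but finitely many zero, with n = Σ_{i≥0} ε_i a_i and ε_i + ε_{i+1} + ⋯ + ε_{i+q−1} ≤ 1 for every i ≥ 0. -/
/-!
The sequence `a i = G (2q - 2 + i)` satisfies `a 0 = 1` and `a (i + 1) = a i + a (i - (q - 1))`,
the truncated index encoding the initial run `a i = i + 1` for `i ≤ q`. A representation is the
same as a `q`-spread set of indices (gaps at least `q`). Removing the largest index shows that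
the values of `a` on a `q`-spread set of indices below `m` sum to less than `a m`. Hence the
largest index of any spread representation of `n` is the unique `m` with
`a m ≤ n < a (m + 1)`, which gives uniqueness; and the greedy choice of that `m` leaves a
remainder below `a (m + 1) - a m = a (m - (q - 1))`, whose representation therefore stays `q`
places below `m`.
-/

open Finset

def IsSpread (q : ℕ) (s : Set ℕ) : Prop :=
  ∀ i ∈ s, ∀ j ∈ s, i < j → i + q ≤ j

namespace IsSpread

variable {q : ℕ} {s t : Set ℕ}

lemma mono (ht : IsSpread q t) (hst : s ⊆ t) : IsSpread q s :=
  fun i hi j hj hij => ht i (hst hi) j (hst hj) hij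

lemma insert {m : ℕ} (hs : IsSpread q s) (hm : ∀ j ∈ s, j + q ≤ m) :
    IsSpread q (insert m s) := by
  rintro i (rfl | hi) j (rfl | hj) hij
  · omega
  · have := hm j hj; omega
  · exact hm i hi
  · exact hs i hi j hj hij

end IsSpread

lemma isSpread_support_iff_window_le_one {q : ℕ} {ε : ℕ → ℕ} (hε : ∀ i, ε i ≤ 1) :
    IsSpread q (Function.support ε) ↔ ∀ i, ∑ j ∈ range q, ε (i + j) ≤ 1 := by
  constructor
  · intro hs i
    calc ∑ j ∈ range q, ε (i + j) ≤ ∑ j ∈ range q, if ε (i + j) ≠ 0 then 1 else 0 :=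
          sum_le_sum fun j _ => by have := hε (i + j); split_ifs <;> omega
      _ = #{j ∈ range q | ε (i + j) ≠ 0} := sum_boole _ _
      _ ≤ 1 := card_le_one.2 fun j hj k hk => by
          simp only [mem_filter, mem_range] at hj hk
          by_contra hjk
          rcases Nat.lt_or_gt_of_ne hjk with h | h
          · have := hs _ hj.2 _ hk.2 (by omega); omega
          · have := hs _ hk.2 _ hj.2 (by omega); omega
  · intro hw i hi j hj hij
    by_contra! hji
    have hpair : ε i + ε j ≤ ∑ k ∈ range q, ε (i + k) := by
      simpa [Nat.add_sub_cancel' hij.le] using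
        add_le_sum (f := fun k => ε (i + k)) (i := 0) (j := j - i) (fun _ _ => Nat.zero_le _)
          (mem_range.2 (by omega)) (mem_range.2 (by omega)) (by omega)
    rw [Function.mem_support] at hi hj
    have := hw i
    omega

lemma indicator_support_eq_self {α : Type*} {ε : α → ℕ} (hε : ∀ i, ε i ≤ 1) :
    (Function.support ε).indicator 1 = ε := by
  ext i
  have := hε i
  by_cases h : ε i = 0 <;> simp [h]; omega

lemma finsum_indicator_one_mul {α M : Type*} [NonAssocSemiring M] (S : Finset α) (a : α → M) :
    ∑ᶠ i, (S : Set α).indicator 1 i * a i = ∑ i ∈ S, a i := by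
  rw [← finsum_mem_coe_finset, finsum_mem_def]
  exact finsum_congr fun i => by by_cases h : i ∈ S <;> simp [h]

structure IsNarayanaSeq (q : ℕ) (a : ℕ → ℕ) : Prop where
  zero : a 0 = 1
  succ (i : ℕ) : a (i + 1) = a i + a (i - (q - 1))

namespace IsNarayanaSeq

variable {q : ℕ} {a : ℕ → ℕ}

lemma pos (ha : IsNarayanaSeq q a) (i : ℕ) : 0 < a i := by
  induction i with
  | zero => simp [ha.zero]
  | succ i ih => rw [ha.succ]; omega

lemma strictMono (ha : IsNarayanaSeq q a) : StrictMono a :=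
  strictMono_nat_of_lt_succ fun i => by have := ha.pos (i - (q - 1)); rw [ha.succ]; omega

lemma sum_eq_zero_iff (ha : IsNarayanaSeq q a) {S : Finset ℕ} :
    ∑ i ∈ S, a i = 0 ↔ S = ∅ := by
  simp [Finset.sum_eq_zero_iff, (ha.pos _).ne', eq_empty_iff_forall_notMem]

lemma exists_le_lt (ha : IsNarayanaSeq q a) {n : ℕ} (hn : 0 < n) :
    ∃ m, a m ≤ n ∧ n < a (m + 1) := by
  induction n with
  | zero => omega
  | succ n ih =>
    rcases Nat.eq_zero_or_pos n with rfl | hn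
    · exact ⟨0, by simp [ha.succ 0, ha.zero]⟩
    obtain ⟨m, hmn, hnm⟩ := ih hn
    rcases Nat.lt_or_ge (n + 1) (a (m + 1)) with h | h
    · exact ⟨m, by omega, h⟩
    · exact ⟨m + 1, h, by have := ha.strictMono (Nat.lt_add_one (m + 1)); omega⟩

lemma sum_lt_of_isSpread (ha : IsNarayanaSeq q a) {S : Finset ℕ} (hS : IsSpread q S) {m : ℕ}
    (hm : ∀ i ∈ S, i < m) : ∑ i ∈ S, a i < a m := by
  induction S using Finset.strongInduction generalizing m with
  | H S ih =>
  rcases S.eq_empty_or_nonempty with rfl | hne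
  · simpa using ha.pos m
  set t := S.max' hne
  have htS : t ∈ S := S.max'_mem hne
  have hrest : ∑ i ∈ S.erase t, a i < a (t - (q - 1)) := by
    refine ih _ (erase_ssubset htS) (hS.mono (coe_subset.2 (erase_subset _ _))) fun j hj => ?_
    have hjt : j < t := lt_of_le_of_ne (S.le_max' j (mem_of_mem_erase hj)) (ne_of_mem_erase hj)
    have := hS j (mem_of_mem_erase hj) t htS hjt
    omega
  calc ∑ i ∈ S, a i = a t + ∑ i ∈ S.erase t, a i := (add_sum_erase _ _ htS).symm
    _ < a (t + 1) := by rw [ha.succ]; omega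
    _ ≤ a m := ha.strictMono.monotone (hm t htS)

lemma exists_isSpread_sum_eq (ha : IsNarayanaSeq q a) (n : ℕ) :
    ∃ S : Finset ℕ, IsSpread q S ∧ ∑ i ∈ S, a i = n := by
  induction n using Nat.strong_induction_on with
  | _ n ih =>
  rcases Nat.eq_zero_or_pos n with rfl | hn
  · exact ⟨∅, fun i hi => by simp at hi, sum_empty⟩
  obtain ⟨m, hmn, hnm⟩ := ha.exists_le_lt hn
  obtain ⟨S, hS, hSn⟩ := ih (n - a m) (by have := ha.pos m; omega)
  have hS_lt : ∀ j ∈ S, j < m - (q - 1) := fun j hj => by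
    have := single_le_sum (fun _ _ => Nat.zero_le _) hj (f := a)
    have := ha.succ m
    exact ha.strictMono.lt_iff_lt.1 (by omega)
  have hmS : m ∉ S := fun h => by have := hS_lt m h; omega
  refine ⟨insert m S, ?_, by rw [sum_insert hmS, hSn]; omega⟩
  rw [coe_insert]
  exact hS.insert fun j hj => by have := hS_lt j hj; omega

lemma max'_le_max'_of_sum_eq (ha : IsNarayanaSeq q a) {S T : Finset ℕ} (hS : IsSpread q S)
    {hSne : S.Nonempty} {hTne : T.Nonempty} (h : ∑ i ∈ S, a i = ∑ i ∈ T, a i) :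
    T.max' hTne ≤ S.max' hSne :=
  Nat.le_of_lt_succ <| ha.strictMono.lt_iff_lt.1 <|
    (single_le_sum (fun _ _ => Nat.zero_le _) (T.max'_mem hTne)).trans_lt
      (h ▸ ha.sum_lt_of_isSpread hS fun i hi => Nat.lt_succ_of_le (S.le_max' i hi))

lemma eq_of_isSpread_of_sum_eq (ha : IsNarayanaSeq q a) {S T : Finset ℕ} (hS : IsSpread q S)
    (hT : IsSpread q T) (h : ∑ i ∈ S, a i = ∑ i ∈ T, a i) : S = T := by
  induction S using Finset.strongInduction generalizing T with
  | H S ih =>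
  rcases S.eq_empty_or_nonempty with rfl | hSne
  · exact (ha.sum_eq_zero_iff.1 (h ▸ sum_empty)).symm
  have hTne : T.Nonempty := nonempty_iff_ne_empty.2 fun hT0 =>
    hSne.ne_empty (ha.sum_eq_zero_iff.1 (by rw [h, hT0, sum_empty]))
  have hmax : S.max' hSne = T.max' hTne :=
    le_antisymm (ha.max'_le_max'_of_sum_eq hT h.symm) (ha.max'_le_max'_of_sum_eq hS h)
  set m := S.max' hSne
  have hmS : m ∈ S := S.max'_mem hSne
  have hmT : m ∈ T := hmax ▸ T.max'_mem hTne
  have herase : S.erase m = T.erase m :=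
    ih _ (erase_ssubset hmS) (hS.mono (coe_subset.2 (erase_subset _ _)))
      (hT.mono (coe_subset.2 (erase_subset _ _))) (by
        have := add_sum_erase S a hmS
        have := add_sum_erase T a hmT
        omega)
  rw [← insert_erase hmS, herase, insert_erase hmT]

end IsNarayanaSeq

lemma fundamental_eq_one {q : ℕ} (hq : 1 ≤ q) {G : ℕ → ℕ}
    (hG0 : ∀ k, k < q - 1 → G k = 0) (hG1 : G (q - 1) = 1)
    (hGrec : ∀ k, G (k + q) = G (k + q - 1) + G k) {k : ℕ} (hk : k ≤ q - 1) :
    G (q - 1 + k) = 1 := by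
  induction k with
  | zero => exact hG1
  | succ k ih =>
    rw [show q - 1 + (k + 1) = k + q by omega, hGrec, show k + q - 1 = q - 1 + k by omega,
      ih (by omega), hG0 k (by omega)]

lemma isNarayanaSeq_of_fundamental {q : ℕ} (hq : 1 ≤ q) {G : ℕ → ℕ}
    (hG0 : ∀ k, k < q - 1 → G k = 0) (hG1 : G (q - 1) = 1)
    (hGrec : ∀ k, G (k + q) = G (k + q - 1) + G k) :
    IsNarayanaSeq q fun i => G (2 * q - 2 + i) := by
  have ha0 : G (2 * q - 2 + 0) = 1 := by
    rw [show 2 * q - 2 + 0 = q - 1 + (q - 1) by omega]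
    exact fundamental_eq_one hq hG0 hG1 hGrec le_rfl
  refine ⟨ha0, fun i => ?_⟩
  rw [show 2 * q - 2 + (i + 1) = q - 1 + i + q by omega, hGrec,
    show q - 1 + i + q - 1 = 2 * q - 2 + i by omega]
  rcases le_or_gt (q - 1) i with h | h
  · rw [show q - 1 + i = 2 * q - 2 + (i - (q - 1)) by omega]
  · rw [fundamental_eq_one hq hG0 hG1 hGrec h.le, show i - (q - 1) = 0 by omega, ha0]

theorem narayana_q_representation_existsUnique_general
    (q : ℕ) (hq : 1 ≤ q) (G : ℕ → ℕ)
    (hG0 : ∀ k, k < q - 1 → G k = 0)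
    (hG1 : G (q - 1) = 1)
    (hGrec : ∀ k, G (k + q) = G (k + q - 1) + G k)
    (n : ℕ) :
    ∃! ε : ℕ → ℕ,
      (Function.support ε).Finite ∧
      (∀ i, ε i ≤ 1) ∧
      (∀ i, ∑ j ∈ Finset.range q, ε (i + j) ≤ 1) ∧
      n = ∑ᶠ i, ε i * G (2 * q - 2 + i) := by
  have ha := isNarayanaSeq_of_fundamental hq hG0 hG1 hGrec
  obtain ⟨S, hS, hSn⟩ := ha.exists_isSpread_sum_eq n
  have hle : ∀ i, (S : Set ℕ).indicator 1 i ≤ 1 := fun i =>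
    Set.indicator_apply_le' (fun _ => le_rfl) (fun _ => zero_le_one)
  refine ⟨(S : Set ℕ).indicator 1,
    ⟨S.finite_toSet.subset Set.support_indicator_subset, hle, ?_, ?_⟩, ?_⟩
  · rw [← isSpread_support_iff_window_le_one hle]
    simpa using hS
  · rw [finsum_indicator_one_mul, hSn]
  · rintro ε ⟨hfin, hε, hwin, hεn⟩
    rw [← isSpread_support_iff_window_le_one hε, ← hfin.coe_toFinset] at hwin
    rw [← indicator_support_eq_self hε, ← hfin.coe_toFinset] at hεn ⊢
    rw [finsum_indicator_one_mul] at hεn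
    rw [ha.eq_of_isSpread_of_sum_eq hwin hS (hεn.symm.trans hSn.symm)]

/-- Fix `q ≥ 1` and let `G` be the fundamental recurrence attached to
`x^q − x^{q−1} − 1`, and set `a_i = G_{2q−2+i}`.  Every integer `n ≥ 1` has exactly one
`q`-representation: a sequence of digits `ε i ∈ {0,1}`, all but finitely many zero, with
`n = ∑ᶠ i, ε i * a i` and `ε i + ε (i+1) + ⋯ + ε (i+q−1) ≤ 1` for every `i`. -/
theorem narayana_q_representation_existsUnique
    (q : ℕ) (hq : 1 ≤ q) (G : ℕ → ℕ)
    (hG0 : ∀ k, k < q - 1 → G k = 0)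
    (hG1 : G (q - 1) = 1)
    (hGrec : ∀ k, G (k + q) = G (k + q - 1) + G k)
    (n : ℕ) (hn : 1 ≤ n) :
    ∃! ε : ℕ → ℕ,
      (Function.support ε).Finite ∧
      (∀ i, ε i ≤ 1) ∧
      (∀ i, ∑ j ∈ Finset.range q, ε (i + j) ≤ 1) ∧
      n = ∑ᶠ i, ε i * G (2 * q - 2 + i) :=
  narayana_q_representation_existsUnique_general q hq G hG0 hG1 hGrec n
end

section
/- For every integer n ≥ 1, the number of compositions of n all of whose parts are congruent to 1 modulo q equals G_{n+q−2}; that is, c_n(parts ≡ 1 (mod q)) = G_{n+q−2}. -/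
private def NComp (q n : ℕ) : Set (List ℕ) :=
  {l : List ℕ | (∀ x ∈ l, 0 < x ∧ x % q = 1 % q) ∧ l.sum = n}

private lemma ncomp_finite (q n : ℕ) : (NComp q n).Finite := by
  have h : Finite ↥{l : List ℕ | (∀ x ∈ l, 0 < x) ∧ l.sum = n} := by
    apply Finite.of_injective
      (fun l => (⟨l.1, fun {i} hi => l.2.1 i hi, l.2.2⟩ : Composition n))
    intro a b hab
    exact Subtype.ext (congrArg Composition.blocks hab)
  have h2 : ({l : List ℕ | (∀ x ∈ l, 0 < x) ∧ l.sum = n}).Finite :=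
    Set.finite_coe_iff.mp h
  exact h2.subset (fun l hl => ⟨fun x hx => (hl.1 x hx).1, hl.2⟩)

private lemma mod_ge (a q : ℕ) (hq : 1 ≤ q) (h : a % q = 1 % q)
    (h1 : 1 ≤ a) (h2 : a ≠ 1) : q + 1 ≤ a := by
  rcases eq_or_lt_of_le hq with rfl | hq2
  · omega
  · rw [Nat.mod_eq_of_lt hq2] at h
    by_contra hc
    push_neg at hc
    rcases Nat.lt_or_ge a q with hlt | hge
    · rw [Nat.mod_eq_of_lt hlt] at h; omega
    · have haq : a = q := by omega
      subst haq
      rw [Nat.mod_self] at h; omega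

private lemma mod_ge' (a q : ℕ) (hq : 1 ≤ q) (h : a % q = 1 % q)
    (h1 : 1 ≤ a) (h2 : a ≤ q) : a = 1 := by
  by_contra hne
  have := mod_ge a q hq h h1 hne
  omega

private lemma ncomp_base (q : ℕ) (hq : 1 ≤ q) (n : ℕ) (h1 : 1 ≤ n) (h2 : n ≤ q) :
    NComp q n = {List.replicate n 1} := by
  ext l
  simp only [NComp, Set.mem_setOf_eq, Set.mem_singleton_iff]
  constructor
  · rintro ⟨hall, hsum⟩
    have hone : ∀ x ∈ l, x = 1 := by
      intro x hx
      obtain ⟨hp, hm⟩ := hall x hx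
      have hle : x ≤ n := hsum ▸ List.single_le_sum (fun y _ => Nat.zero_le y) x hx
      exact mod_ge' x q hq hm hp (hle.trans h2)
    have hrep : l = List.replicate l.length 1 := List.eq_replicate_iff.mpr ⟨rfl, hone⟩
    have hlen : l.sum = l.length := by
      conv_lhs => rw [hrep]
      simp
    rw [hrep, hlen.symm, hsum]
  · rintro rfl
    refine ⟨fun x hx => ?_, by simp⟩
    have := List.eq_of_mem_replicate hx
    subst this
    exact ⟨one_pos, rfl⟩

private lemma ncomp_rec (q : ℕ) (hq : 1 ≤ q) (m : ℕ) :
    (NComp q (m + 1 + q)).ncard = (NComp q (m + q)).ncard + (NComp q (m + 1)).ncard := by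
  have hne : ∀ t ∈ NComp q (m + 1), t ≠ [] := by
    rintro t ⟨_, hsum⟩ rfl
    simp at hsum
  have heq : NComp q (m + 1 + q) =
      (fun t => 1 :: t) '' NComp q (m + q) ∪
      (fun t => (t.head! + q) :: t.tail) '' NComp q (m + 1) := by
    ext l
    constructor
    · rintro ⟨hall, hsum⟩
      match l with
      | [] => simp at hsum; omega
      | a :: t =>
        obtain ⟨hapos, hamod⟩ := hall a (by simp)
        have hsum' : a + t.sum = m + 1 + q := by simpa using hsum
        by_cases ha : a = 1
        · left
          exact ⟨t, ⟨fun x hx => hall x (by simp [hx]), by omega⟩, by rw [ha]⟩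
        · right
          have haq : q + 1 ≤ a := mod_ge a q hq hamod hapos ha
          refine ⟨(a - q) :: t, ⟨fun x hx => ?_, by simp; omega⟩, ?_⟩
          · rcases List.mem_cons.mp hx with rfl | hx'
            · refine ⟨by omega, ?_⟩
              have : a - q + q = a := by omega
              rw [← Nat.add_mod_right (a - q) q, this]; exact hamod
            · exact hall x (by simp [hx'])
          · simp only [List.head!_cons, List.tail_cons]
            congr 1
            omega
    · rintro (⟨t, ⟨hall, hsum⟩, rfl⟩ | ⟨t, ht, rfl⟩)
      · refine ⟨fun x hx => ?_, by simp; omega⟩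
        rcases List.mem_cons.mp hx with rfl | hx'
        · exact ⟨one_pos, rfl⟩
        · exact hall x hx'
      · obtain ⟨hall, hsum⟩ := ht
        have htne : t ≠ [] := hne t ⟨hall, hsum⟩
        have hhd : t.head! ∈ t := List.head!_mem_self htne
        obtain ⟨hp, hm⟩ := hall _ hhd
        constructor
        · intro x hx
          rcases List.mem_cons.mp hx with rfl | hx'
          · exact ⟨by omega, by rw [Nat.add_mod_right]; exact hm⟩
          · exact hall x (List.mem_of_mem_tail hx')
        · have : t.head! + t.tail.sum = t.sum := by
            conv_rhs => rw [← List.cons_head!_tail htne]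
            simp
          simp only [List.sum_cons]
          omega
  rw [heq]
  have hfin1 : ((fun t => 1 :: t) '' NComp q (m + q)).Finite :=
    (ncomp_finite q (m + q)).image _
  have hfin2 : ((fun t => (t.head! + q) :: t.tail) '' NComp q (m + 1)).Finite :=
    (ncomp_finite q (m + 1)).image _
  have hdisj : Disjoint ((fun t => 1 :: t) '' NComp q (m + q))
      ((fun t => (t.head! + q) :: t.tail) '' NComp q (m + 1)) := by
    rw [Set.disjoint_left]
    rintro l ⟨t1, _, rfl⟩ ⟨t2, ht2, hl⟩
    have htne : t2 ≠ [] := hne t2 ht2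
    have hp : 0 < t2.head! := (ht2.1 _ (List.head!_mem_self htne)).1
    simp only [List.cons.injEq] at hl
    omega
  rw [Set.ncard_union_eq hdisj hfin1 hfin2]
  congr 1
  · exact Set.ncard_image_of_injective _ (fun a b h => by simpa using h)
  · apply Set.ncard_image_of_injOn
    intro t1 h1 t2 h2 hgl
    simp only [List.cons.injEq] at hgl
    have e1 : t1.head! = t2.head! := by omega
    rw [← List.cons_head!_tail (hne t1 h1), ← List.cons_head!_tail (hne t2 h2),
      e1, hgl.2]

private lemma G_base (q : ℕ) (hq : 1 ≤ q) (G : ℕ → ℕ)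
    (hG0 : ∀ k, k < q - 1 → G k = 0) (hG1 : G (q - 1) = 1)
    (hGrec : ∀ k, G (k + q) = G (k + q - 1) + G k) :
    ∀ j, j ≤ q - 1 → G (q - 1 + j) = 1 := by
  intro j
  induction j with
  | zero => simpa using hG1
  | succ j ih =>
    intro hj
    have h1 : q - 1 + (j + 1) = j + q := by omega
    rw [h1, hGrec j, hG0 j (by omega)]
    have h2 : j + q - 1 = q - 1 + j := by omega
    rw [h2, ih (by omega)]

/-- Fix `q ≥ 1` and let `G` be the fundamental recurrence attached to
`x^q − x^{q−1} − 1`.  For every `n ≥ 1`, the number of compositions of `n` all of whose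
(positive) parts are congruent to `1` modulo `q` equals `G_{n+q−2}`. -/
theorem narayana_compositions_one_mod_q
    (q : ℕ) (hq : 1 ≤ q) (G : ℕ → ℕ)
    (hG0 : ∀ k, k < q - 1 → G k = 0)
    (hG1 : G (q - 1) = 1)
    (hGrec : ∀ k, G (k + q) = G (k + q - 1) + G k)
    (n : ℕ) (hn : 1 ≤ n) :
    {l : List ℕ | (∀ x ∈ l, 0 < x ∧ x % q = 1 % q) ∧ l.sum = n}.ncard
      = G (n + q - 2) := by
  have key : ∀ n, 1 ≤ n → (NComp q n).ncard = G (n + q - 2) := by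
    intro n
    induction n using Nat.strong_induction_on with
    | _ n ih =>
      intro hn
      rcases Nat.lt_or_ge q n with hlt | hle
      · obtain ⟨m, rfl⟩ : ∃ m, n = m + 1 + q := ⟨n - 1 - q, by omega⟩
        rw [ncomp_rec q hq m, ih (m + q) (by omega) (by omega),
          ih (m + 1) (by omega) (by omega)]
        have h1 : m + 1 + q + q - 2 = (m + q - 1) + q := by omega
        rw [h1, hGrec (m + q - 1)]
        congr 1
        · congr 1; omega
        · congr 1; omega
      · rw [ncomp_base q hq n hn hle, Set.ncard_singleton]
        have h1 : n + q - 2 = q - 1 + (n - 1) := by omega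
        rw [h1, G_base q hq G hG0 hG1 hGrec (n - 1) (by omega)]
  exact key n hn
end

section
/- For every integer n ≥ 1, the number of compositions of n all of whose parts are at least q equals G_{n−1}; that is, c_n(parts ≥ q) = G_{n−1}. -/
/-- Fix `q ≥ 1` and let `G` be the fundamental recurrence attached to
`x^q − x^{q−1} − 1`.  For every `n ≥ 1`, the number of compositions of `n` all of whose
parts are at least `q` equals `G_{n−1}`. -/
theorem narayana_compositions_parts_ge_q
    (q : ℕ) (hq : 1 ≤ q) (G : ℕ → ℕ)
    (hG0 : ∀ k, k < q - 1 → G k = 0)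
    (hG1 : G (q - 1) = 1)
    (hGrec : ∀ k, G (k + q) = G (k + q - 1) + G k)
    (n : ℕ) (hn : 1 ≤ n) :
    {l : List ℕ | (∀ x ∈ l, q ≤ x) ∧ l.sum = n}.ncard = G (n - 1) := by
  set S : ℕ → Set (List ℕ) := fun m => {l : List ℕ | (∀ x ∈ l, q ≤ x) ∧ l.sum = m} with hS
  have hfin : ∀ m : ℕ, (S m).Finite := by
    intro m
    apply Set.Finite.subset (Set.finite_range (Composition.blocks (n := m)))
    rintro l ⟨h1, h2⟩
    exact ⟨⟨l, fun {i} hi => lt_of_lt_of_le hq (h1 i hi), h2⟩, rfl⟩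
  suffices H : ∀ m, 1 ≤ m → (S m).ncard = G (m - 1) from H n hn
  intro m
  induction m using Nat.strong_induction_on with
  | _ m IH =>
    intro hm
    rcases lt_trichotomy m q with h | h | h
    · have hempty : S m = ∅ := by
        ext l
        simp only [hS, Set.mem_setOf_eq, Set.mem_empty_iff_false, iff_false]
        rintro ⟨h1, h2⟩
        match l with
        | [] => simp at h2; omega
        | a :: t =>
          have ha := h1 a (by simp)
          simp only [List.sum_cons] at h2
          omega
      rw [hempty, Set.ncard_empty, hG0 (m - 1) (by omega)]
    · have hone : S m = {[q]} := by
        ext l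
        simp only [hS, Set.mem_setOf_eq, Set.mem_singleton_iff]
        constructor
        · rintro ⟨h1, h2⟩
          match l with
          | [] => simp at h2; omega
          | a :: t =>
            have ha := h1 a (by simp)
            simp only [List.sum_cons] at h2
            have ha' : a = q := by
              match t with
              | [] => simp at h2; omega
              | b :: s =>
                have hb := h1 b (by simp)
                simp only [List.sum_cons] at h2
                omega
            subst ha'
            have ht : t = [] := by
              match t with
              | [] => rfl
              | b :: s =>
                have hb := h1 b (by simp)
                simp only [List.sum_cons] at h2
                omega
            rw [ht]
        · rintro rfl
          subst h
          exact ⟨by intro x hx; simp at hx; omega, by simp⟩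
      rw [hone, Set.ncard_singleton, h, hG1]
    · obtain ⟨k, rfl⟩ : ∃ k, m = k + q + 1 := ⟨m - q - 1, by omega⟩
      set f : List ℕ → List ℕ := fun l => match l with
        | [] => []
        | a :: t => (a + 1) :: t with hf
      have hne : ∀ {s : ℕ} {l : List ℕ}, l ∈ S s → 1 ≤ s → l ≠ [] := by
        rintro s l ⟨h1, h2⟩ hs rfl
        simp at h2; omega
      have hsplit : S (k + q + 1) = f '' S (k + q) ∪ (fun t => q :: t) '' S (k + 1) := by
        ext l
        constructor
        · rintro ⟨h1, h2⟩
          match l with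
          | [] => simp at h2
          | a :: t =>
            have ha := h1 a (by simp)
            simp only [List.sum_cons] at h2
            rcases eq_or_lt_of_le ha with rfl | ha'
            · right
              exact ⟨t, ⟨fun x hx => h1 x (by simp [hx]), by omega⟩, rfl⟩
            · left
              refine ⟨(a - 1) :: t, ⟨?_, ?_⟩, ?_⟩
              · intro x hx
                rcases List.mem_cons.mp hx with rfl | hx
                · omega
                · exact h1 x (by simp [hx])
              · simp only [List.sum_cons]; omega
              · simp only [hf]
                congr 1
                omega
        · rintro (⟨l', ⟨h1, h2⟩, rfl⟩ | ⟨t, ⟨h1, h2⟩, rfl⟩)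
          · match l' with
            | [] => simp at h2; omega
            | a :: t =>
              have ha := h1 a (by simp)
              simp only [List.sum_cons] at h2
              refine ⟨?_, ?_⟩
              · intro x hx
                rcases List.mem_cons.mp hx with rfl | hx
                · omega
                · exact h1 x (by simp [hx])
              · simp only [hf, List.sum_cons]; omega
          · refine ⟨?_, ?_⟩
            · intro x hx
              rcases List.mem_cons.mp hx with h | hx
              · omega
              · exact h1 x hx
            · simp only [List.sum_cons]; omega
      have hdisj : Disjoint (f '' S (k + q)) ((fun t => q :: t) '' S (k + 1)) := by
        rw [Set.disjoint_left]
        rintro l ⟨l1, hl1, rfl⟩ ⟨l2, hl2, heq⟩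
        match l1 with
        | [] => exact hne hl1 (by omega) rfl
        | a :: t =>
          have ha := hl1.1 a (by simp)
          simp only [hf, List.cons.injEq] at heq
          omega
      have hinjf : Set.InjOn f (S (k + q)) := by
        intro l1 hl1 l2 hl2 heq
        match l1, l2 with
        | [], _ => exact absurd rfl (hne hl1 (by omega))
        | _, [] => exact absurd rfl (hne hl2 (by omega))
        | a :: t, b :: s =>
          simp only [hf, List.cons.injEq] at heq
          rw [heq.2]
          congr 1
          omega
      have hinjc : Set.InjOn (fun t => q :: t) (S (k + 1)) := by
        intro l1 _ l2 _ heq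
        simpa using heq
      have hc1 : (S (k + q)).ncard = G (k + q - 1) := IH (k + q) (by omega) (by omega)
      have hc2 : (S (k + 1)).ncard = G k := by
        have := IH (k + 1) (by omega) (by omega)
        simpa using this
      rw [hsplit, Set.ncard_union_eq hdisj ((hfin _).image _) ((hfin _).image _),
        Set.ncard_image_of_injOn hinjf, Set.ncard_image_of_injOn hinjc, hc1, hc2]
      have : k + q + 1 - 1 = k + q := by omega
      rw [this, hGrec k]
end

section
/- Suppose ε : ℕ → ℕ → {0,1} assigns to each integer j ≥ 0 its q-representation, i.e., for every j ≥ 0 one has j = Σ_{i≥0} ε(j)(i)·a_i with all but finitely many ε(j)(i) zero and ε(j)(i) + ε(j)(i+1) + ⋯ + ε(j)(i+q−1) ≤ 1 for all i ≥ 0. Let s(j) := Σ_{i≥0} ε(j)(i) be the number of summands of j, and let S_A(N) := Σ_{j=0}^{N−1} s(j). Then for every n ≥ 0, S_A(G_{n+q−1}) = Σ_{k=0}^{⌊n/q⌋} k·C(n − k(q−1), k), where C(m, k) denotes the binomial coefficient. -/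
/-!
Encode a `q`-representation by the finset of positions of its ones; the window condition says
that these positions are at least `q` apart. The top position `m` of a representation of `v` is
forced by `a m ≤ v < a (m + 1)`, which gives uniqueness, and shows that the numbers in
`[a m, a (m + 1)) = [a m, a m + a (m + 1 - q))` are exactly `a m + j` with the representation
of `j` plus one extra digit at `m`. Hence the cumulative digit count `S` satisfies
`S (a (m + 1)) = S (a m) + S (a (m + 1 - q)) + a (m + 1 - q)`. After the shift
`G (n + q - 1) = a (n - (q - 1))` this is the recurrence `T n = T (n - 1) + T (n - q) + A (n - q)`
that Pascal's rule gives for `T n = ∑ k * C(n - k(q - 1), k)` and `A n = ∑ C(n - k(q - 1), k)`,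
where `A` obeys the recurrence `A n = A (n - 1) + A (n - q)` of `G (n + q - 1)`.
-/

open Finset

namespace Narayana

theorem eq_of_rec_of_forall_lt {q : ℕ} (hq : 1 ≤ q) {f g c : ℕ → ℕ}
    (hf : ∀ n, q ≤ n → f n = f (n - 1) + f (n - q) + c n)
    (hg : ∀ n, q ≤ n → g n = g (n - 1) + g (n - q) + c n)
    (hlt : ∀ n < q, f n = g n) (n : ℕ) : f n = g n := by
  induction n using Nat.strong_induction_on with
  | _ n ih =>
    rcases lt_or_ge n q with hn | hn
    · exact hlt n hn
    · rw [hf n hn, hg n hn, ih (n - 1) (by omega), ih (n - q) (by omega)]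

def binomSum (q : ℕ) (w : ℕ → ℕ) (n : ℕ) : ℕ :=
  ∑ k ∈ range (n / q + 1), w k * (n - k * (q - 1)).choose k

section BinomSum

variable {q : ℕ} {w : ℕ → ℕ} {n : ℕ}

theorem choose_sub_mul_eq_zero (hq : 1 ≤ q) {k : ℕ} (hk : n / q < k) :
    (n - k * (q - 1)).choose k = 0 := by
  have hlt : n < k * (q - 1) + k := by
    rw [← Nat.mul_add_one, Nat.sub_add_cancel hq]
    exact (Nat.div_lt_iff_lt_mul hq).mp hk
  have hk0 : 0 < k := (Nat.zero_le _).trans_lt hk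
  exact Nat.choose_eq_zero_of_lt (by omega)

theorem binomSum_eq_sum_range (hq : 1 ≤ q) {B : ℕ} (hB : n / q < B) :
    binomSum q w n = ∑ k ∈ range B, w k * (n - k * (q - 1)).choose k := by
  refine sum_subset (fun k hk => by simp only [mem_range] at hk ⊢; omega) fun k hk hk' => ?_
  simp only [mem_range, not_lt] at hk hk'
  rw [choose_sub_mul_eq_zero hq (by omega), mul_zero]

theorem binomSum_of_lt (h : n < q) : binomSum q w n = w 0 := by
  simp [binomSum, Nat.div_eq_of_lt h]

theorem choose_sub_mul_succ (hq : 1 ≤ q) (hn : q ≤ n) (k : ℕ) :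
    (n - (k + 1) * (q - 1)).choose (k + 1)
      = (n - 1 - (k + 1) * (q - 1)).choose (k + 1) + (n - q - k * (q - 1)).choose k := by
  have hmul : (k + 1) * (q - 1) = k * (q - 1) + (q - 1) := Nat.succ_mul k (q - 1)
  rcases lt_or_ge ((k + 1) * (q - 1)) n with h | h
  · obtain ⟨r, hr⟩ : ∃ r, n - (k + 1) * (q - 1) = r + 1 :=
      ⟨n - 1 - (k + 1) * (q - 1), by omega⟩
    rw [hr, Nat.choose_succ_succ', add_comm, show n - 1 - (k + 1) * (q - 1) = r by omega,
      show n - q - k * (q - 1) = r by omega]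
  · -- all three upper arguments vanish, while `k ≠ 0` since `q ≤ n`
    have hk : k ≠ 0 := by rintro rfl; omega
    rw [Nat.choose_eq_zero_of_lt (by omega), Nat.choose_eq_zero_of_lt (by omega),
      Nat.choose_eq_zero_of_lt (by omega)]

theorem binomSum_rec (hq : 1 ≤ q) (hn : q ≤ n) :
    binomSum q w n = binomSum q w (n - 1) + binomSum q (fun k => w (k + 1)) (n - q) := by
  have hdiv (m : ℕ) : m / q ≤ m := Nat.div_le_self m q
  rw [binomSum_eq_sum_range hq (B := n + 1) (by have := hdiv n; omega),
    binomSum_eq_sum_range hq (B := n + 1) (by have := hdiv (n - 1); omega),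
    binomSum_eq_sum_range hq (B := n) (by have := hdiv (n - q); omega),
    sum_range_succ', sum_range_succ']
  simp only [choose_sub_mul_succ hq hn, mul_add, sum_add_distrib, zero_mul, Nat.sub_zero,
    Nat.choose_zero_right]
  ring

end BinomSum

def Sparse (q : ℕ) (s : Finset ℕ) : Prop :=
  ∀ i ∈ s, ∀ j ∈ s, i < j → i + q ≤ j

theorem Sparse.mono {q : ℕ} {s t : Finset ℕ} (hs : Sparse q s) (hts : t ⊆ s) : Sparse q t :=
  fun i hi j hj => hs i (hts hi) j (hts hj)

theorem Sparse.insert {q m : ℕ} {s : Finset ℕ} (hs : Sparse q s)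
    (hm : ∀ i ∈ s, i + q ≤ m) : Sparse q (insert m s) := by
  intro i hi j hj hij
  rw [mem_insert] at hi hj
  rcases hi with rfl | hi <;> rcases hj with rfl | hj
  · omega
  · have := hm j hj; omega
  · exact hm i hi
  · exact hs i hi j hj hij

theorem sparse_of_window {q : ℕ} {e : ℕ → ℕ} {s : Finset ℕ} (hs : ∀ i ∈ s, e i ≠ 0)
    (hwin : ∀ i, ∑ t ∈ range q, e (i + t) ≤ 1) : Sparse q s := by
  intro i hi j hj hij
  by_contra! hjq
  have hpair : e i + e j ≤ ∑ t ∈ range q, e (i + t) := by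
    have hsub : ({0, j - i} : Finset ℕ) ⊆ range q := by
      intro t ht
      simp only [mem_insert, mem_singleton] at ht
      rw [mem_range]
      omega
    calc e i + e j = ∑ t ∈ {0, j - i}, e (i + t) := by
          rw [sum_pair (by omega), Nat.add_zero, Nat.add_sub_cancel' hij.le]
      _ ≤ _ := sum_le_sum_of_subset hsub
  have := hs i hi
  have := hs j hj
  have := hwin i
  omega

/-- The truncated subtraction in `t + 1 - q` makes `a t = t + 1` for `t < q`, as for
`a t = G (2q - 2 + t)`. -/
structure IsNarayanaSeq (q : ℕ) (a : ℕ → ℕ) : Prop where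
  zero : a 0 = 1
  succ : ∀ t, a (t + 1) = a t + a (t + 1 - q)

namespace IsNarayanaSeq

variable {q : ℕ} {a : ℕ → ℕ} (ha : IsNarayanaSeq q a)
include ha

theorem one_le : 1 ≤ q := by
  by_contra! hq
  have := ha.succ 0
  simp only [Nat.lt_one_iff.mp hq, Nat.sub_zero, ha.zero] at this
  omega

theorem pos (t : ℕ) : 0 < a t := by
  induction t with
  | zero => rw [ha.zero]; exact one_pos
  | succ t ih => rw [ha.succ]; omega

theorem strictMono : StrictMono a :=
  strictMono_nat_of_lt_succ fun t => by have := ha.pos (t + 1 - q); rw [ha.succ]; omega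

theorem sum_lt_of_forall_lt {s : Finset ℕ} (hs : Sparse q s) {M : ℕ} (hM : ∀ i ∈ s, i < M) :
    ∑ i ∈ s, a i < a M := by
  induction M using Nat.strong_induction_on generalizing s with
  | _ M ih =>
    rcases M with _ | M
    · have : s = ∅ := eq_empty_of_forall_notMem fun i hi => by have := hM i hi; omega
      rw [this, sum_empty]
      exact ha.pos 0
    by_cases hMs : M ∈ s
    · have hrest : ∑ i ∈ s.erase M, a i < a (M + 1 - q) := by
        refine ih (M + 1 - q) (by have := ha.one_le; omega) (hs.mono (erase_subset M s))
          fun i hi => ?_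
        have := hs i (mem_of_mem_erase hi) M hMs
          (lt_of_le_of_ne (Nat.lt_succ_iff.mp (hM i (mem_of_mem_erase hi))) (ne_of_mem_erase hi))
        omega
      rw [← add_sum_erase s a hMs, ha.succ]
      omega
    · have := ih M M.lt_succ_self hs fun i hi => lt_of_le_of_ne (Nat.lt_succ_iff.mp (hM i hi))
        (fun h => hMs (h ▸ hi))
      exact this.trans (ha.strictMono M.lt_succ_self)

theorem sum_lt_succ_of_forall_le {s : Finset ℕ} (hs : Sparse q s) {m : ℕ}
    (hm : ∀ i ∈ s, i ≤ m) : ∑ i ∈ s, a i < a (m + 1) :=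
  ha.sum_lt_of_forall_lt hs fun i hi => Nat.lt_succ_of_le (hm i hi)

theorem eq_of_sum_eq {s t : Finset ℕ} (hs : Sparse q s) (ht : Sparse q t)
    (h : ∑ i ∈ s, a i = ∑ i ∈ t, a i) : s = t := by
  induction s using Finset.induction_on_max generalizing t with
  | empty =>
    refine (eq_empty_of_forall_notMem fun i hi => ?_).symm
    have : a i ≤ _ := single_le_sum_of_canonicallyOrdered hi
    have := ha.pos i
    simp only [sum_empty] at h
    omega
  | insert m s hlt ih =>
    have hmem : m ∈ insert m s := mem_insert_self m s
    have hmax : ∀ i ∈ insert m s, i ≤ m := by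
      intro i hi
      rcases mem_insert.mp hi with rfl | hi
      exacts [le_rfl, (hlt i hi).le]
    have ht₀ : t.Nonempty := by
      rw [nonempty_iff_ne_empty]
      rintro rfl
      have : a m ≤ _ := single_le_sum_of_canonicallyOrdered hmem
      have := ha.pos m
      simp only [sum_empty] at h
      omega
    -- both top digits `m` and `max' t` are pinned down by `a m ≤ value < a (m + 1)`
    have htop : t.max' ht₀ = m := by
      have h₁ : a m ≤ _ := single_le_sum_of_canonicallyOrdered hmem
      have h₂ := ha.sum_lt_succ_of_forall_le hs hmax
      have h₃ : a (t.max' ht₀) ≤ _ := single_le_sum_of_canonicallyOrdered (t.max'_mem ht₀)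
      have h₄ := ha.sum_lt_succ_of_forall_le ht (m := t.max' ht₀) fun i hi => t.le_max' i hi
      have := ha.strictMono.lt_iff_lt.mp (h₁.trans_lt (h ▸ h₄))
      have := ha.strictMono.lt_iff_lt.mp (h₃.trans_lt (h ▸ h₂))
      omega
    have hmt : m ∈ t := htop ▸ t.max'_mem ht₀
    have hms : m ∉ s := fun hm => (hlt m hm).false
    rw [← insert_erase hmt, ih (hs.mono (subset_insert m s)) (ht.mono (erase_subset m t))]
    rw [sum_insert hms, ← add_sum_erase t a hmt] at h
    omega

section Representation

variable {R : ℕ → Finset ℕ} (hR : ∀ j, Sparse q (R j))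
  (hRsum : ∀ j, ∑ i ∈ R j, a i = j)
include hR hRsum

theorem rep_zero : R 0 = ∅ :=
  ha.eq_of_sum_eq (hR 0) (fun _ h => absurd h (notMem_empty _)) (by rw [hRsum, sum_empty])

theorem card_rep_add {m j : ℕ} (hj : j < a (m + 1 - q)) : #(R (a m + j)) = #(R j) + 1 := by
  have hbelow : ∀ i ∈ R j, i + q ≤ m := by
    intro i hi
    have hij : a i ≤ j := hRsum j ▸ single_le_sum_of_canonicallyOrdered hi
    have := ha.strictMono.lt_iff_lt.mp (hij.trans_lt hj)
    omega
  have hm : m ∉ R j := fun hm => by have := hbelow m hm; have := ha.one_le; omega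
  have hrep : R (a m + j) = insert m (R j) :=
    ha.eq_of_sum_eq (hR _) ((hR j).insert hbelow) (by rw [hRsum, sum_insert hm, hRsum])
  rw [hrep, card_insert_of_notMem hm]

theorem sum_card_rep_succ (m : ℕ) :
    ∑ j ∈ range (a (m + 1)), #(R j)
      = ∑ j ∈ range (a m), #(R j) + ∑ j ∈ range (a (m + 1 - q)), #(R j)
        + a (m + 1 - q) := by
  rw [ha.succ, sum_range_add,
    sum_congr rfl fun j hj => ha.card_rep_add hR hRsum (mem_range.mp hj), sum_add_distrib,
    sum_const, card_range, smul_eq_mul, mul_one, add_assoc]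

end Representation

theorem eq_binomSum (n : ℕ) : a (n - (q - 1)) = binomSum q (fun _ => 1) n := by
  have hq := ha.one_le
  refine eq_of_rec_of_forall_lt hq (f := fun n => a (n - (q - 1))) (g := binomSum q fun _ => 1)
    (c := 0) (fun n hn => ?_) (fun n hn => ?_) (fun n hn => ?_) n
  · rw [show n - (q - 1) = n - q + 1 by omega, ha.succ,
      show n - q + 1 - q = n - q - (q - 1) by omega, show n - q = n - 1 - (q - 1) by omega]
    rfl
  · exact binomSum_rec hq hn
  · rw [Nat.sub_eq_zero_of_le (by omega), ha.zero, binomSum_of_lt hn]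

theorem sum_card_rep_eq_binomSum {R : ℕ → Finset ℕ} (hR : ∀ j, Sparse q (R j))
    (hRsum : ∀ j, ∑ i ∈ R j, a i = j) (n : ℕ) :
    ∑ j ∈ range (a (n - (q - 1))), #(R j) = binomSum q (fun k => k) n := by
  have hq := ha.one_le
  refine eq_of_rec_of_forall_lt hq (f := fun n => ∑ j ∈ range (a (n - (q - 1))), #(R j))
    (g := binomSum q fun k => k) (c := fun n => binomSum q (fun _ => 1) (n - q)) (fun n hn => ?_)
    (fun n hn => ?_) (fun n hn => ?_) n
  · rw [← ha.eq_binomSum, show n - (q - 1) = n - q + 1 by omega, ha.sum_card_rep_succ hR hRsum,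
      show n - q + 1 - q = n - q - (q - 1) by omega, show n - q = n - 1 - (q - 1) by omega]
  · rw [binomSum_rec hq hn, add_assoc]
    congr 1
    simp only [binomSum, ← sum_add_distrib, add_mul, one_mul]
  · rw [Nat.sub_eq_zero_of_le (by omega), ha.zero, sum_range_one, ha.rep_zero hR hRsum,
      card_empty, binomSum_of_lt hn]

end IsNarayanaSeq

section Digits

variable {e : ℕ → ℕ} (hfin : (Function.support e).Finite) (hle : ∀ i, e i ≤ 1)
include hfin hle

theorem eq_one_of_mem_toFinset {i : ℕ} (hi : i ∈ hfin.toFinset) : e i = 1 := by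
  have := hle i
  have := Function.mem_support.mp (hfin.mem_toFinset.mp hi)
  omega

theorem finsum_mul_eq_sum_toFinset (w : ℕ → ℕ) :
    ∑ᶠ i, e i * w i = ∑ i ∈ hfin.toFinset, w i := by
  rw [finsum_eq_sum_of_support_subset _ fun i hi => hfin.mem_toFinset.mpr
    (Function.support_mul_subset_left e w hi)]
  exact sum_congr rfl fun i hi => by rw [eq_one_of_mem_toFinset hfin hle hi, one_mul]

theorem finsum_eq_card_toFinset : ∑ᶠ i, e i = #hfin.toFinset := by
  simpa using finsum_mul_eq_sum_toFinset hfin hle fun _ => 1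

end Digits

section Recurrence

variable {q : ℕ} {G : ℕ → ℕ} (hG0 : ∀ k, k < q - 1 → G k = 0) (hG1 : G (q - 1) = 1)
  (hGrec : ∀ k, G (k + q) = G (k + q - 1) + G k)
include hG0 hG1 hGrec

theorem G_add_sub_one_of_lt {n : ℕ} (hn : n < q) : G (n + q - 1) = 1 := by
  induction n with
  | zero => simpa using hG1
  | succ n ih => rw [show n + 1 + q - 1 = n + q by omega, hGrec, ih (by omega), hG0 n (by omega)]

theorem G_add_sub_one (hq : 1 ≤ q) (n : ℕ) : G (n + q - 1) = G (2 * q - 2 + (n - (q - 1))) := by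
  rcases le_or_gt (q - 1) n with hn | hn
  · congr 1; omega
  · rw [G_add_sub_one_of_lt hG0 hG1 hGrec (by omega), Nat.sub_eq_zero_of_le hn.le,
      show 2 * q - 2 + 0 = q - 1 + q - 1 by omega, G_add_sub_one_of_lt hG0 hG1 hGrec (by omega)]

theorem isNarayanaSeq (hq : 1 ≤ q) : IsNarayanaSeq q fun i => G (2 * q - 2 + i) where
  zero := by
    rw [show 2 * q - 2 + 0 = q - 1 + q - 1 by omega, G_add_sub_one_of_lt hG0 hG1 hGrec (by omega)]
  succ t := by
    have h := hGrec (t + q - 1)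
    rwa [show t + q - 1 + q = 2 * q - 2 + (t + 1) by omega,
      show 2 * q - 2 + (t + 1) - 1 = 2 * q - 2 + t by omega, G_add_sub_one hG0 hG1 hGrec hq t,
      show t - (q - 1) = t + 1 - q by omega] at h

end Recurrence

end Narayana

/-- Fix `q ≥ 1`, let `G` be the fundamental recurrence attached to
`x^q − x^{q−1} − 1`, and set `a_i = G_{2q−2+i}`.  Suppose `ε` assigns to every `j ≥ 0` its
`q`-representation.  With `s(j) = Σᶠ i, ε j i` and `S_A(N) = Σ_{j<N} s(j)`, we have, for
every `n ≥ 0`, `S_A(G_{n+q−1}) = Σ_{k=0}^{⌊n/q⌋} k·C(n − k(q−1), k)`. -/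
theorem narayana_cumulative_digit_sum_binomial
    (q : ℕ) (hq : 1 ≤ q) (G : ℕ → ℕ)
    (hG0 : ∀ k, k < q - 1 → G k = 0)
    (hG1 : G (q - 1) = 1)
    (hGrec : ∀ k, G (k + q) = G (k + q - 1) + G k)
    (ε : ℕ → ℕ → ℕ)
    (hfin : ∀ j, (Function.support (ε j)).Finite)
    (hdig : ∀ j i, ε j i ≤ 1)
    (hwin : ∀ j i, ∑ t ∈ Finset.range q, ε j (i + t) ≤ 1)
    (hrep : ∀ j, j = ∑ᶠ i, ε j i * G (2 * q - 2 + i))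
    (n : ℕ) :
    ∑ j ∈ Finset.range (G (n + q - 1)), (∑ᶠ i, ε j i)
      = ∑ k ∈ Finset.range (n / q + 1), k * Nat.choose (n - k * (q - 1)) k := by
  have hR : ∀ j, Narayana.Sparse q (hfin j).toFinset := fun j =>
    Narayana.sparse_of_window (fun i hi => (hfin j).mem_toFinset.mp hi) (hwin j)
  have hRsum : ∀ j, ∑ i ∈ (hfin j).toFinset, G (2 * q - 2 + i) = j := fun j => by
    rw [← Narayana.finsum_mul_eq_sum_toFinset (hfin j) (hdig j), ← hrep]
  simp_rw [Narayana.finsum_eq_card_toFinset (hfin _) (hdig _),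
    Narayana.G_add_sub_one hG0 hG1 hGrec hq]
  exact (Narayana.isNarayanaSeq hG0 hG1 hGrec hq).sum_card_rep_eq_binomSum hR hRsum n
end

section
/- Suppose ε : ℕ → ℕ → {0,1} assigns to each integer j ≥ 0 its q-representation, let s(j) := Σ_{i≥0} ε(j)(i), let S_A(N) := Σ_{j=0}^{N−1} s(j), and set b_n := S_A(a_n). Then for every n ≥ q, b_n = b_{n−1} + a_{n−q} + b_{n−q}. -/
private lemma nar_sum_range_add {M : Type*} [AddCommMonoid M] (f : ℕ → M) (a b : ℕ) :
    ∑ i ∈ Finset.range (a + b), f i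
      = (∑ i ∈ Finset.range a, f i) + ∑ i ∈ Finset.range b, f (a + i) := by
  induction b with
  | zero => simp
  | succ b ih =>
      rw [Nat.add_succ, Finset.sum_range_succ, Finset.sum_range_succ, ih, add_assoc]

/-- The value of an admissible digit string supported below `m` is less than `A m`. -/
private lemma nar_bound (q : ℕ) (hq : 1 ≤ q) (A : ℕ → ℕ)
    (hA0 : A 0 = 1) (hmono : ∀ k, A k < A (k + 1))
    (hArec : ∀ k, A (k + q) = A (k + q - 1) + A k)
    (e : ℕ → ℕ) (he : ∀ i, e i ≤ 1)
    (hw : ∀ i, ∑ t ∈ Finset.range q, e (i + t) ≤ 1) :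
    ∀ m, ∑ i ∈ Finset.range m, e i * A i < A m := by
  intro m
  induction m using Nat.strong_induction_on with
  | _ m ih =>
    match m with
    | 0 => simp; omega
    | m + 1 =>
      rw [Finset.sum_range_succ]
      rcases Nat.le_one_iff_eq_zero_or_eq_one.mp (he m) with h0 | h1
      · have h2 := ih m (Nat.lt_succ_self m)
        have h3 := hmono m
        rw [h0, zero_mul, add_zero]
        omega
      · set s := m + 1 - q with hs
        have hzero : ∀ i, s ≤ i → i < m → e i = 0 := by
          intro i hsi him
          have hpair : ({i - s, m - s} : Finset ℕ) ⊆ Finset.range q := by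
            intro x hx
            simp only [Finset.mem_insert, Finset.mem_singleton] at hx
            rcases hx with rfl | rfl <;> simp only [Finset.mem_range] <;> omega
          have hne : i - s ≠ m - s := by omega
          have h2 : ∑ t ∈ ({i - s, m - s} : Finset ℕ), e (s + t)
              ≤ ∑ t ∈ Finset.range q, e (s + t) :=
            Finset.sum_le_sum_of_subset hpair
          rw [Finset.sum_pair hne] at h2
          have hi' : s + (i - s) = i := by omega
          have hm' : s + (m - s) = m := by omega
          rw [hi', hm', h1] at h2
          have h3 := hw s
          omega
        have hsub : ∑ i ∈ Finset.range m, e i * A i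
            = ∑ i ∈ Finset.range s, e i * A i := by
          refine (Finset.sum_subset (Finset.range_subset_range.mpr (by omega)) ?_).symm
          intro x hx hx'
          simp only [Finset.mem_range] at hx hx'
          rw [hzero x (by omega) hx, zero_mul]
        have hlt : ∑ i ∈ Finset.range s, e i * A i < A s := ih s (by omega)
        rw [hsub, h1, one_mul]
        rcases Nat.lt_or_ge m q with hmq | hmq
        · have hs0 : s = 0 := by omega
          have h4 := hmono m
          rw [hs0] at hlt ⊢
          simp only [Finset.range_zero, Finset.sum_empty] at hlt ⊢
          omega
        · have h5 := hArec s
          have h1' : s + q = m + 1 := by omega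
          have h2' : s + q - 1 = m := by omega
          rw [h2', h1'] at h5
          omega

/-- Uniqueness of admissible representations (on an initial segment). -/
private lemma nar_uniq (q : ℕ) (hq : 1 ≤ q) (A : ℕ → ℕ)
    (hA0 : A 0 = 1) (hmono : ∀ k, A k < A (k + 1))
    (hArec : ∀ k, A (k + q) = A (k + q - 1) + A k) :
    ∀ m (e1 e2 : ℕ → ℕ), (∀ i, e1 i ≤ 1) →
      (∀ i, ∑ t ∈ Finset.range q, e1 (i + t) ≤ 1) →
      (∀ i, e2 i ≤ 1) →
      (∀ i, ∑ t ∈ Finset.range q, e2 (i + t) ≤ 1) →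
      (∑ i ∈ Finset.range m, e1 i * A i = ∑ i ∈ Finset.range m, e2 i * A i) →
      ∀ i < m, e1 i = e2 i := by
  intro m
  induction m with
  | zero => intro _ _ _ _ _ _ _ i hi; omega
  | succ m ih =>
    intro e1 e2 h1 w1 h2 w2 heq i hi
    rw [Finset.sum_range_succ, Finset.sum_range_succ] at heq
    have contra : ∀ f g : ℕ → ℕ, (∀ i, g i ≤ 1) →
        (∀ i, ∑ t ∈ Finset.range q, g (i + t) ≤ 1) →
        f m = 1 → g m = 0 →
        (∑ i ∈ Finset.range m, f i * A i) + f m * A m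
          = (∑ i ∈ Finset.range m, g i * A i) + g m * A m → False := by
      intro f g hg wg hfm hgm heq'
      have hb : ∑ i ∈ Finset.range m, g i * A i < A m :=
        nar_bound q hq A hA0 hmono hArec g hg wg m
      rw [hfm, hgm, one_mul, zero_mul, add_zero] at heq'
      omega
    have key : e1 m = e2 m := by
      by_contra hne
      rcases Nat.le_one_iff_eq_zero_or_eq_one.mp (h1 m) with ha | ha <;>
        rcases Nat.le_one_iff_eq_zero_or_eq_one.mp (h2 m) with hb | hb
      · exact hne (ha.trans hb.symm)
      · exact contra e2 e1 h1 w1 hb ha heq.symm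
      · exact contra e1 e2 h2 w2 ha hb heq
      · exact hne (ha.trans hb.symm)
    rcases Nat.lt_succ_iff_lt_or_eq.mp hi with hi' | rfl
    · rw [key] at heq
      exact ih e1 e2 h1 w1 h2 w2 (by omega) i hi'
    · exact key

/-- Digits above `m` vanish when the value is `< A m`. -/
private lemma nar_supp (A : ℕ → ℕ) (hinc : Monotone A)
    (e : ℕ → ℕ) (hfe : (Function.support e).Finite)
    (m v : ℕ) (hv : (∑ᶠ i, e i * A i) = v) (hvm : v < A m) :
    ∀ i, m ≤ i → e i = 0 := by
  intro i hi
  by_contra h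
  have h1 : 1 ≤ e i := Nat.one_le_iff_ne_zero.mpr h
  have hsupp : (Function.support fun i => e i * A i).Finite := by
    apply hfe.subset
    intro x hx
    simp only [Function.mem_support] at hx ⊢
    intro h0
    exact hx (by rw [h0, zero_mul])
  have h2 : e i * A i ≤ ∑ᶠ j, e j * A j :=
    single_le_finsum i hsupp (fun j => Nat.zero_le _)
  have h3 : A m ≤ A i := hinc hi
  have h4 : A i ≤ e i * A i := Nat.le_mul_of_pos_left _ h1
  omega

/-- Fix `q ≥ 1`, let `G` be the fundamental recurrence attached to
`x^q − x^{q−1} − 1`, and set `a_k = G_{2q−2+k}`.  Suppose `ε` assigns to every `j ≥ 0` its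
`q`-representation, let `s(j) = Σᶠ i, ε j i`, `S_A(N) = Σ_{j<N} s(j)` and `b_n = S_A(a_n)`.
Then for every `n ≥ q`, `b_n = b_{n−1} + a_{n−q} + b_{n−q}`. -/
theorem narayana_cumulative_digit_sum_recurrence
    (q : ℕ) (hq : 1 ≤ q) (G : ℕ → ℕ)
    (hG0 : ∀ k, k < q - 1 → G k = 0)
    (hG1 : G (q - 1) = 1)
    (hGrec : ∀ k, G (k + q) = G (k + q - 1) + G k)
    (ε : ℕ → ℕ → ℕ)
    (hfin : ∀ j, (Function.support (ε j)).Finite)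
    (hdig : ∀ j i, ε j i ≤ 1)
    (hwin : ∀ j i, ∑ t ∈ Finset.range q, ε j (i + t) ≤ 1)
    (hrep : ∀ j, j = ∑ᶠ i, ε j i * G (2 * q - 2 + i))
    (n : ℕ) (hn : q ≤ n) :
    ∑ j ∈ Finset.range (G (2 * q - 2 + n)), (∑ᶠ i, ε j i)
      = (∑ j ∈ Finset.range (G (2 * q - 2 + (n - 1))), (∑ᶠ i, ε j i))
        + G (2 * q - 2 + (n - q))
        + ∑ j ∈ Finset.range (G (2 * q - 2 + (n - q))), (∑ᶠ i, ε j i) := by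
  set A : ℕ → ℕ := fun k => G (2 * q - 2 + k) with hAdef
  -- basic facts about G above index q - 1
  have hGpos : ∀ t, 1 ≤ G (q - 1 + t) := by
    intro t
    induction t with
    | zero => simpa using hG1.ge
    | succ t ih =>
      have h := hGrec t
      have e1 : t + q = q - 1 + (t + 1) := by omega
      have e2 : t + q - 1 = q - 1 + t := by omega
      rw [e2, e1] at h
      omega
  have hGone : ∀ t, t ≤ q - 1 → G (q - 1 + t) = 1 := by
    intro t
    induction t with
    | zero => intro _; simpa using hG1
    | succ t ih =>
      intro ht
      have h := hGrec t
      have e1 : t + q = q - 1 + (t + 1) := by omega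
      have e2 : t + q - 1 = q - 1 + t := by omega
      rw [e2, e1] at h
      rw [h, ih (by omega), hG0 t (by omega)]
  have hA0 : A 0 = 1 := by
    have h := hGone (q - 1) le_rfl
    show G (2 * q - 2 + 0) = 1
    rw [show 2 * q - 2 + 0 = q - 1 + (q - 1) from by omega]
    exact h
  have hstep : ∀ k, A (k + 1) = A k + G (q - 1 + k) := by
    intro k
    have h := hGrec (q - 1 + k)
    have e1 : q - 1 + k + q = 2 * q - 2 + (k + 1) := by omega
    have e2 : q - 1 + k + q - 1 = 2 * q - 2 + k := by omega
    rw [e2, e1] at h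
    exact h
  have hmono : ∀ k, A k < A (k + 1) := by
    intro k
    have h := hGpos k
    rw [hstep k]
    omega
  have hAmono : Monotone A := monotone_nat_of_le_succ fun k => (hmono k).le
  have hArec : ∀ k, A (k + q) = A (k + q - 1) + A k := by
    intro k
    have h := hGrec (2 * q - 2 + k)
    have e1 : 2 * q - 2 + k + q = 2 * q - 2 + (k + q) := by omega
    have e2 : 2 * q - 2 + k + q - 1 = 2 * q - 2 + (k + q - 1) := by omega
    rw [e2, e1] at h
    exact h
  have hrepA : ∀ j, j = ∑ᶠ i, ε j i * A i := hrep
  have hAn : A n = A (n - 1) + A (n - q) := by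
    have h := hArec (n - q)
    rw [show n - q + q = n from by omega] at h
    exact h
  -- the key step : digit sums in the block [A (n-1), A n)
  have key : ∀ k, k < A (n - q) →
      (∑ᶠ i, ε (A (n - 1) + k) i) = (∑ᶠ i, ε k i) + 1 := by
    intro k hk
    set j := A (n - 1) + k with hj
    have hek : ∀ i, n - q ≤ i → ε k i = 0 :=
      nar_supp A hAmono (ε k) (hfin k) (n - q) k (hrepA k).symm hk
    set δ : ℕ → ℕ := fun i => if i = n - 1 then 1 else ε k i with hδ
    have hδdig : ∀ i, δ i ≤ 1 := by
      intro i
      simp only [hδ]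
      split
      · exact le_rfl
      · exact hdig k i
    have hδ0 : ∀ i, n ≤ i → δ i = 0 := by
      intro i hi
      simp only [hδ]
      rw [if_neg (by omega)]
      exact hek i (by omega)
    have hδwin : ∀ i, ∑ t ∈ Finset.range q, δ (i + t) ≤ 1 := by
      intro i
      rcases Nat.lt_or_ge i (n - q) with hi | hi
      · have hc : ∀ t ∈ Finset.range q, δ (i + t) = ε k (i + t) := by
          intro t ht
          simp only [Finset.mem_range] at ht
          simp only [hδ]
          rw [if_neg (by omega)]
        rw [Finset.sum_congr rfl hc]
        exact hwin k i
      · have hfilter : ∑ t ∈ Finset.range q, δ (i + t)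
            = ∑ t ∈ Finset.filter (fun t => i + t = n - 1) (Finset.range q), δ (i + t) := by
          refine (Finset.sum_filter_of_ne ?_).symm
          intro t _ hne
          by_contra hc
          apply hne
          simp only [hδ]
          rw [if_neg hc]
          exact hek _ (by omega)
        have hsub2 : Finset.filter (fun t => i + t = n - 1) (Finset.range q)
            ⊆ {n - 1 - i} := by
          intro t ht
          simp only [Finset.mem_filter] at ht
          simp only [Finset.mem_singleton]
          omega
        calc ∑ t ∈ Finset.range q, δ (i + t)
            = ∑ t ∈ Finset.filter (fun t => i + t = n - 1) (Finset.range q), δ (i + t) :=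
              hfilter
          _ ≤ ∑ t ∈ ({n - 1 - i} : Finset ℕ), δ (i + t) :=
              Finset.sum_le_sum_of_subset hsub2
          _ = δ (i + (n - 1 - i)) := Finset.sum_singleton _ _
          _ ≤ 1 := hδdig _
    -- values
    have hsum2 : ∑ i ∈ Finset.range (n - 1), ε k i * A i = k := by
      have hs : Function.support (fun i => ε k i * A i)
          ⊆ ↑(Finset.range (n - 1)) := by
        intro x hx
        simp only [Function.mem_support] at hx
        simp only [Finset.coe_range, Set.mem_Iio]
        by_contra hxn
        exact hx (by rw [hek x (by omega), zero_mul])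
      rw [← finsum_eq_sum_of_support_subset _ hs]
      exact (hrepA k).symm
    have hδval : ∑ i ∈ Finset.range n, δ i * A i = j := by
      rw [show n = (n - 1) + 1 from by omega, Finset.sum_range_succ]
      have hδtop : δ (n - 1) = 1 := by simp [hδ]
      have hsum1 : ∑ i ∈ Finset.range (n - 1), δ i * A i
          = ∑ i ∈ Finset.range (n - 1), ε k i * A i := by
        refine Finset.sum_congr rfl fun x hx => ?_
        simp only [Finset.mem_range] at hx
        simp only [hδ]
        rw [if_neg (by omega)]
      rw [hδtop, one_mul, hsum1, hsum2, hj]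
      omega
    have hej : ∀ i, n ≤ i → ε j i = 0 := by
      refine nar_supp A hAmono (ε j) (hfin j) n j (hrepA j).symm ?_
      omega
    have hεjval : ∑ i ∈ Finset.range n, ε j i * A i = j := by
      have hs : Function.support (fun i => ε j i * A i) ⊆ ↑(Finset.range n) := by
        intro x hx
        simp only [Function.mem_support] at hx
        simp only [Finset.coe_range, Set.mem_Iio]
        by_contra hxn
        exact hx (by rw [hej x (by omega), zero_mul])
      rw [← finsum_eq_sum_of_support_subset _ hs]
      exact (hrepA j).symm
    have hall : ∀ i, ε j i = δ i := by
      have huniq := nar_uniq q hq A hA0 hmono hArec n (ε j) δ (hdig j) (hwin j)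
        hδdig hδwin (by rw [hεjval, hδval])
      intro i
      rcases Nat.lt_or_ge i n with hi | hi
      · exact huniq i hi
      · rw [hej i hi, hδ0 i hi]
    -- compute digit sums
    have hsupj : Function.support (ε j) ⊆ ↑(Finset.range n) := by
      intro x hx
      simp only [Function.mem_support] at hx
      simp only [Finset.coe_range, Set.mem_Iio]
      by_contra hxn
      exact hx (hej x (by omega))
    have hsupk : Function.support (ε k) ⊆ ↑(Finset.range (n - 1)) := by
      intro x hx
      simp only [Function.mem_support] at hx
      simp only [Finset.coe_range, Set.mem_Iio]
      by_contra hxn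
      exact hx (hek x (by omega))
    rw [finsum_eq_sum_of_support_subset _ hsupj,
        finsum_eq_sum_of_support_subset _ hsupk]
    rw [show n = (n - 1) + 1 from by omega, Finset.sum_range_succ]
    have h1 : ε j ((n - 1)) = 1 := by rw [hall]; simp [hδ]
    have h2 : ∑ i ∈ Finset.range (n - 1), ε j i
        = ∑ i ∈ Finset.range (n - 1), ε k i := by
      refine Finset.sum_congr rfl fun x hx => ?_
      simp only [Finset.mem_range] at hx
      rw [hall x]
      simp only [hδ]
      rw [if_neg (by omega)]
    rw [h1, h2]
    simp
  -- assemble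
  show (∑ j ∈ Finset.range (A n), ∑ᶠ i, ε j i)
      = (∑ j ∈ Finset.range (A (n - 1)), ∑ᶠ i, ε j i) + A (n - q)
        + ∑ j ∈ Finset.range (A (n - q)), ∑ᶠ i, ε j i
  rw [hAn, nar_sum_range_add]
  have h3 : ∑ k ∈ Finset.range (A (n - q)), (∑ᶠ i, ε (A (n - 1) + k) i)
      = (∑ k ∈ Finset.range (A (n - q)), ∑ᶠ i, ε k i) + A (n - q) := by
    have h4 : ∀ k ∈ Finset.range (A (n - q)),
        (∑ᶠ i, ε (A (n - 1) + k) i) = (∑ᶠ i, ε k i) + 1 := by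
      intro k hk
      exact key k (Finset.mem_range.mp hk)
    rw [Finset.sum_congr rfl h4, Finset.sum_add_distrib]
    simp
  rw [h3]
  ring
end

section
/- Let q ∈ {1, 2, 3}, let ℓ ≥ 2q−2, and let p be an integer with 1 ≤ p < G_ℓ. Let Σ_{i≥0} ε_i a_i be the unique q-representation of G_ℓ − p and let i₀ be the smallest index with ε_{i₀} = 1 (so a_{i₀} is the least summand of G_ℓ − p). Then a_{i₀} ≤ q·p; moreover, if q = 3 and p ≥ 2, then a_{i₀} ≤ 3p − 1. -/
/-- Monotonicity of the fundamental recurrence sequence. -/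
lemma nnls_mono (r : ℕ) (G : ℕ → ℕ) (hG0 : ∀ k, k < r → G k = 0)
    (hrec : ∀ k, G (k + r + 1) = G (k + r) + G k) :
    ∀ m n, m ≤ n → G m ≤ G n := by
  have step : ∀ k, G k ≤ G (k + 1) := by
    intro k
    rcases lt_or_ge k r with h | h
    · rw [hG0 k h]; exact Nat.zero_le _
    · have h1 := hrec (k - r)
      rw [show k - r + r = k from by omega] at h1
      omega
  intro m n h
  exact monotone_nat_of_le_succ step h

/-- The key successor identity `a_{j+1} = a_j + G (r + j)`. -/
lemma nnls_succ (r : ℕ) (G : ℕ → ℕ)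
    (hrec : ∀ k, G (k + r + 1) = G (k + r) + G k) :
    ∀ j, G (2 * r + j + 1) = G (2 * r + j) + G (r + j) := by
  intro j
  have h := hrec (r + j)
  rw [show r + j + r + 1 = 2 * r + j + 1 from by omega,
      show r + j + r = 2 * r + j from by omega] at h
  exact h

/-- Chain bound: a sparse sum of `a_i`'s leaves a gap of at least `G (r + min)`
below `a (max + 1)`. -/
lemma nnls_chain (r : ℕ) (G : ℕ → ℕ) (hG0 : ∀ k, k < r → G k = 0)
    (hrec : ∀ k, G (k + r + 1) = G (k + r) + G k) :
    ∀ S : Finset ℕ, ∀ hne : S.Nonempty,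
      (∀ i ∈ S, ∀ j ∈ S, i < j → i + (r + 1) ≤ j) →
      (∑ i ∈ S, G (2 * r + i)) + G (r + S.min' hne) ≤ G (2 * r + S.max' hne + 1) := by
  have mono := nnls_mono r G hG0 hrec
  have hsucc := nnls_succ r G hrec
  intro S
  induction S using Finset.strongInduction with
  | _ S ih =>
    intro hne hgap
    set M := S.max' hne with hMdef
    have hMmem : M ∈ S := S.max'_mem hne
    by_cases hS' : (S.erase M).Nonempty
    · set M' := (S.erase M).max' hS' with hM'def
      have hM'mem : M' ∈ S.erase M := Finset.max'_mem _ _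
      have hM'S : M' ∈ S := Finset.mem_of_mem_erase hM'mem
      have hM'ne : M' ≠ M := Finset.ne_of_mem_erase hM'mem
      have hM'lt : M' < M := lt_of_le_of_ne (S.le_max' _ hM'S) hM'ne
      have hgapM : M' + (r + 1) ≤ M := hgap M' hM'S M hMmem hM'lt
      have hminlt : S.min' hne < M := lt_of_le_of_lt (S.min'_le _ hM'S) hM'lt
      have hminmem : S.min' hne ∈ S.erase M :=
        Finset.mem_erase.mpr ⟨Nat.ne_of_lt hminlt, S.min'_mem hne⟩
      have hmin : (S.erase M).min' hS' = S.min' hne := by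
        apply le_antisymm
        · exact Finset.min'_le _ _ hminmem
        · exact S.min'_le _ (Finset.mem_of_mem_erase ((S.erase M).min'_mem hS'))
      have hkey := ih (S.erase M) (Finset.erase_ssubset hMmem) hS'
        (fun i hi j hj hij => hgap i (Finset.mem_of_mem_erase hi) j
          (Finset.mem_of_mem_erase hj) hij)
      rw [hmin, ← hM'def] at hkey
      have hsum : G (2 * r + M) + ∑ i ∈ S.erase M, G (2 * r + i)
          = ∑ i ∈ S, G (2 * r + i) := Finset.add_sum_erase S (fun i => G (2 * r + i)) hMmem
      have h1 : G (2 * r + M' + 1) ≤ G (r + M) := mono _ _ (by omega)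
      have h2 : G (2 * r + M + 1) = G (2 * r + M) + G (r + M) := hsucc M
      omega
    · have hx : ∀ x ∈ S, x = M := by
        intro x hx
        by_contra hne'
        exact hS' ⟨x, Finset.mem_erase.mpr ⟨hne', hx⟩⟩
      have hmin : S.min' hne = M := hx _ (S.min'_mem hne)
      have hsum : ∑ i ∈ S, G (2 * r + i) = G (2 * r + M) :=
        Finset.sum_eq_single_of_mem M hMmem (fun b hb hbM => absurd (hx b hb) hbM)
      rw [hmin, hsum, hsucc M]

/-- Key lemma: the remainder `p` is at least `G (r + i₀)`. -/
lemma nnls_key (r : ℕ) (G : ℕ → ℕ)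
    (hG0 : ∀ k, k < r → G k = 0)
    (hrec : ∀ k, G (k + r + 1) = G (k + r) + G k)
    (ℓ p : ℕ) (hp1 : 1 ≤ p) (hp2 : p < G ℓ)
    (ε : ℕ → ℕ) (hfin : (Function.support ε).Finite)
    (hdig : ∀ i, ε i ≤ 1)
    (hwin : ∀ i, ∑ t ∈ Finset.range (r + 1), ε (i + t) ≤ 1)
    (hrep : G ℓ - p = ∑ᶠ i, ε i * G (2 * r + i))
    (i₀ : ℕ) (hi₀ : ε i₀ = 1) (hleast : ∀ i < i₀, ε i = 0) :
    G (r + i₀) ≤ p := by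
  classical
  have mono := nnls_mono r G hG0 hrec
  set S : Finset ℕ := hfin.toFinset with hSdef
  have hmemS : ∀ i, i ∈ S ↔ ε i = 1 := by
    intro i
    rw [hSdef, Set.Finite.mem_toFinset, Function.mem_support]
    have := hdig i
    omega
  have hi₀S : i₀ ∈ S := (hmemS i₀).mpr hi₀
  have hne : S.Nonempty := ⟨i₀, hi₀S⟩
  have hsub : Function.support (fun i => ε i * G (2 * r + i)) ⊆ ↑S := by
    intro x hx
    have hx' : ε x * G (2 * r + x) ≠ 0 := hx
    have hεx : ε x ≠ 0 := fun h => hx' (by rw [h, zero_mul])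
    rw [hSdef, Set.Finite.coe_toFinset]
    exact hεx
  have hsum : ∑ᶠ i, ε i * G (2 * r + i) = ∑ i ∈ S, G (2 * r + i) := by
    rw [finsum_eq_sum_of_support_subset _ hsub]
    exact Finset.sum_congr rfl (fun i hi => by rw [(hmemS i).mp hi, one_mul])
  have hgap : ∀ i ∈ S, ∀ j ∈ S, i < j → i + (r + 1) ≤ j := by
    intro i hiS j hjS hij
    by_contra hcon
    push_neg at hcon
    have hpair : ({0, j - i} : Finset ℕ) ⊆ Finset.range (r + 1) := by
      intro t ht'
      simp only [Finset.mem_insert, Finset.mem_singleton] at ht'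
      rw [Finset.mem_range]
      rcases ht' with h | h <;> omega
    have h2 : ∑ t ∈ ({0, j - i} : Finset ℕ), ε (i + t)
        ≤ ∑ t ∈ Finset.range (r + 1), ε (i + t) :=
      Finset.sum_le_sum_of_subset hpair
    rw [Finset.sum_pair (show (0 : ℕ) ≠ j - i from by omega)] at h2
    rw [Nat.add_zero, show i + (j - i) = j from by omega] at h2
    have hw := hwin i
    have hεi := (hmemS i).mp hiS
    have hεj := (hmemS j).mp hjS
    omega
  set M := S.max' hne with hMdef
  have hminS : S.min' hne = i₀ := by
    apply le_antisymm
    · exact Finset.min'_le _ _ hi₀S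
    · by_contra h
      push_neg at h
      have h1 := hleast _ h
      have h2 := (hmemS _).mp (S.min'_mem hne)
      omega
  have hchain := nnls_chain r G hG0 hrec S hne hgap
  rw [hminS, ← hMdef] at hchain
  have hn : G ℓ - p = ∑ i ∈ S, G (2 * r + i) := by rw [hrep, hsum]
  have hMn : G (2 * r + M) ≤ ∑ i ∈ S, G (2 * r + i) :=
    Finset.single_le_sum (f := fun i => G (2 * r + i)) (fun i _ => Nat.zero_le _) (S.max'_mem hne)
  have hML : 2 * r + M + 1 ≤ ℓ := by
    by_contra h
    push_neg at h
    have := mono ℓ (2 * r + M) (by omega)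
    omega
  have hfin2 := mono (2 * r + M + 1) ℓ hML
  omega

/-- **Lemma 2.** Let `q ∈ {1,2,3}`, `G` the fundamental recurrence
attached to `x^q − x^{q−1} − 1`, `a_i = G_{2q−2+i}`, `ℓ ≥ 2q−2` and `1 ≤ p < G_ℓ`.
If `ε` is the `q`-representation of `G_ℓ − p` and `i₀` is the least index with
`ε i₀ = 1`, then `a_{i₀} ≤ q·p`, and moreover `a_{i₀} ≤ 3p − 1` when `q = 3` and `p ≥ 2`. -/
theorem narayana_nim_least_summand_bound
    (q : ℕ) (hq : q = 1 ∨ q = 2 ∨ q = 3) (G : ℕ → ℕ)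
    (hG0 : ∀ k, k < q - 1 → G k = 0)
    (hG1 : G (q - 1) = 1)
    (hGrec : ∀ k, G (k + q) = G (k + q - 1) + G k)
    (ℓ p : ℕ) (hℓ : 2 * q - 2 ≤ ℓ) (hp1 : 1 ≤ p) (hp2 : p < G ℓ)
    (ε : ℕ → ℕ)
    (hfin : (Function.support ε).Finite)
    (hdig : ∀ i, ε i ≤ 1)
    (hwin : ∀ i, ∑ t ∈ Finset.range q, ε (i + t) ≤ 1)
    (hrep : G ℓ - p = ∑ᶠ i, ε i * G (2 * q - 2 + i))
    (i₀ : ℕ) (hi₀ : ε i₀ = 1) (hleast : ∀ i < i₀, ε i = 0) :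
    G (2 * q - 2 + i₀) ≤ q * p ∧
      (q = 3 → 2 ≤ p → G (2 * q - 2 + i₀) ≤ 3 * p - 1) := by
  rcases hq with rfl | rfl | rfl
  · -- q = 1, r = 0
    have hrec : ∀ k, G (k + 0 + 1) = G (k + 0) + G k := by
      intro k
      have h := hGrec k
      rw [show k + 1 - 1 = k + 0 from by omega, show k + 1 = k + 0 + 1 from by omega] at h
      exact h
    have hG0' : ∀ k, k < 0 → G k = 0 := fun k hk => absurd hk (by omega)
    have hrep' : G ℓ - p = ∑ᶠ i, ε i * G (2 * 0 + i) := by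
      rw [hrep]
    have hkey := nnls_key 0 G hG0' hrec ℓ p hp1 hp2 ε hfin hdig
      (by exact hwin) hrep' i₀ hi₀ hleast
    constructor
    · rw [show 2 * 1 - 2 + i₀ = 0 + i₀ from by omega, one_mul]
      calc G (0 + i₀) = G (0 + i₀) := rfl
        _ ≤ p := hkey
    · intro h; omega
  · -- q = 2, r = 1
    have hrec : ∀ k, G (k + 1 + 1) = G (k + 1) + G k := by
      intro k
      have h := hGrec k
      rw [show k + 2 - 1 = k + 1 from by omega, show k + 2 = k + 1 + 1 from by omega] at h
      exact h
    have hG0' : ∀ k, k < 1 → G k = 0 := fun k hk => hG0 k (by omega)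
    have hrep' : G ℓ - p = ∑ᶠ i, ε i * G (2 * 1 + i) := by
      rw [hrep]
    have hkey := nnls_key 1 G hG0' hrec ℓ p hp1 hp2 ε hfin hdig
      (by exact hwin) hrep' i₀ hi₀ hleast
    have mono := nnls_mono 1 G hG0' hrec
    have hgrow : G (2 + i₀) ≤ 2 * G (1 + i₀) := by
      have h := hrec (i₀)
      have h2 : G i₀ ≤ G (i₀ + 1) := mono _ _ (by omega)
      rw [show i₀ + 1 + 1 = 2 + i₀ from by omega] at h
      rw [show i₀ + 1 = 1 + i₀ from by omega] at h h2
      omega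
    constructor
    · rw [show 2 * 2 - 2 + i₀ = 2 + i₀ from by omega]
      calc G (2 + i₀) ≤ 2 * G (1 + i₀) := hgrow
        _ ≤ 2 * p := by omega
    · intro h; omega
  · -- q = 3, r = 2
    have hrec : ∀ k, G (k + 2 + 1) = G (k + 2) + G k := by
      intro k
      have h := hGrec k
      rw [show k + 3 - 1 = k + 2 from by omega, show k + 3 = k + 2 + 1 from by omega] at h
      exact h
    have hG0' : ∀ k, k < 2 → G k = 0 := fun k hk => hG0 k (by omega)
    have hG1' : G 2 = 1 := by
      have := hG1
      norm_num at this
      exact this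
    have hrep' : G ℓ - p = ∑ᶠ i, ε i * G (2 * 2 + i) := by
      rw [hrep]
    have hkey := nnls_key 2 G hG0' hrec ℓ p hp1 hp2 ε hfin hdig
      (by exact hwin) hrep' i₀ hi₀ hleast
    -- small values of G
    have g0 : G 0 = 0 := hG0' 0 (by norm_num)
    have g1 : G 1 = 0 := hG0' 1 (by norm_num)
    have g3 : G 3 = 1 := by have h := hrec 0; norm_num at h; omega
    have g4 : G 4 = 1 := by have h := hrec 1; norm_num at h; omega
    have g5 : G 5 = 2 := by have h := hrec 2; norm_num at h; omega
    have g6 : G 6 = 3 := by have h := hrec 3; norm_num at h; omega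
    have g7 : G 7 = 4 := by have h := hrec 4; norm_num at h; omega
    have g8 : G 8 = 6 := by have h := hrec 5; norm_num at h; omega
    have g9 : G 9 = 9 := by have h := hrec 6; norm_num at h; omega
    -- strict growth lemma : for m ≥ 2, m ≠ 4, G (m+2) + 1 ≤ 3 * G m
    have hgrow : ∀ m, 2 ≤ m → m ≠ 4 → G (m + 2) + 1 ≤ 3 * G m := by
      intro m
      induction m using Nat.strong_induction_on with
      | _ m ih =>
        intro hm2 hm4
        rcases lt_or_ge m 8 with h | h
        · interval_cases m <;> norm_num <;> omega
        · obtain ⟨k, rfl⟩ : ∃ k, m = k + 8 := ⟨m - 8, by omega⟩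
          have e1 := hrec (k + 7)
          rw [show k + 7 + 2 + 1 = k + 10 from by omega,
              show k + 7 + 2 = k + 9 from by omega] at e1
          have e2 := hrec (k + 5)
          rw [show k + 5 + 2 + 1 = k + 8 from by omega,
              show k + 5 + 2 = k + 7 from by omega] at e2
          have h1 := ih (k + 7) (by omega) (by omega) (by omega)
          rw [show k + 7 + 2 = k + 9 from by omega] at h1
          have h2 := ih (k + 5) (by omega) (by omega) (by omega)
          rw [show k + 5 + 2 = k + 7 from by omega] at h2
          rw [show k + 8 + 2 = k + 10 from by omega]
          omega
    rw [show 2 * 3 - 2 + i₀ = 4 + i₀ from by omega]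
    by_cases hi2 : i₀ = 2
    · subst hi2
      norm_num
      have hp' : G 4 ≤ p := by
        have := hkey
        norm_num at this
        exact this
      constructor
      · omega
      · intro hp2'; omega
    · have hg := hgrow (2 + i₀) (by omega) (by omega)
      rw [show 2 + i₀ + 2 = 4 + i₀ from by omega] at hg
      constructor
      · omega
      · intro _ _; omega
end

section
/- Let s ≥ 1 and let f = ℓ_1 ∘ ℓ_2 ∘ ⋯ ∘ ℓ_s, where each ℓ_i is one of the two functions a or b, with x = #{i : ℓ_i = a} and y = #{i : ℓ_i = b} (so x + y = s). Then there exists a constant C ≥ 0 such that for every integer n ≥ 1, 0 ≤ N_{x+3y−2}·a(n) + N_{x+3y}·b(n) − N_{x+3y−3}·n − f(n) ≤ C. -/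
/- Auxiliary definitions: `del j = N j - α N (j-1)`, `gam j = N j - α³ N (j-3)`,
and the linear combination `NB j n = N (j-2) a n + N j b n - N (j-3) n`. -/

noncomputable def del (N : ℤ → ℤ) (α : ℝ) (j : ℤ) : ℝ := (N j : ℝ) - α * N (j-1)
noncomputable def gam (N : ℤ → ℤ) (α : ℝ) (j : ℤ) : ℝ := (N j : ℝ) - α^3 * N (j-3)
def NB (N : ℤ → ℤ) (a b : ℕ → ℕ) (j : ℤ) (n : ℕ) : ℤ :=
  N (j-2) * a n + N j * b n - N (j-3) * n

lemma hp (c t : ℝ) (hc : 0 ≤ c) (h0 : 0 ≤ t) (h1 : t ≤ 1) : c * t ≤ c := by nlinarith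

lemma hn (c t : ℝ) (hc : c ≤ 0) (h0 : 0 ≤ t) : c * t ≤ 0 :=
  mul_nonpos_of_nonpos_of_nonneg hc h0

lemma prodbound (c d t : ℝ) (h : c ≤ d) (hd : 0 ≤ d) (h0 : 0 ≤ t) (h1 : t ≤ 1) :
    c * t ≤ d := by
  nlinarith [mul_nonneg (sub_nonneg.2 h) h0, mul_nonneg hd (sub_nonneg.2 h1)]

lemma absmul (α x c : ℝ) (hal : 1.465 < α) (hc : 0 ≤ c)
    (h : |α * x| ≤ 1.465 * c) : |x| ≤ c := by
  by_contra h'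
  push_neg at h'
  have h0 : (0:ℝ) < α := by linarith
  have : 1.465 * c < 1.465 * |x| := by nlinarith
  have h2 : 1.465 * |x| < α * |x| := by nlinarith [abs_nonneg x]
  rw [abs_mul, abs_of_pos h0] at h
  linarith

lemma box (α : ℝ) (hal : 1.465 < α) (hau : α < 1.466) (hα : α ^ 3 = α ^ 2 + 1)
    (d : ℤ → ℝ) (hrec : ∀ j : ℤ, α * d (j+2) = (α - α^2) * d (j+1) - d j)
    (j0 : ℤ) (hA0 : |d j0| ≤ 2/5) (hB0 : |d (j0+1)| ≤ 1/4) :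
    ∀ j : ℤ, j0 ≤ j → |d j| ≤ 2/5 := by
  have h0 : (0:ℝ) < α := by linarith
  have ha2u : α^2 < 2.15 := by nlinarith
  have ha2l : 2.14 < α^2 := by nlinarith
  have hrec2 : ∀ j : ℤ, α * (α * d (j+3)) = α * ((α - α^2) * d (j+1) + (α-1) * d j) := by
    intro j
    have e1 := hrec (j+1)
    rw [show j+1+2 = j+3 by ring, show j+1+1 = j+2 by ring] at e1
    have e2 := hrec j
    linear_combination α * e1 + (α - α^2) * e2 + α * d (j+1) * hα
  have hrec2' : ∀ j : ℤ, α * d (j+3) = (α - α^2) * d (j+1) + (α-1) * d j := by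
    intro j
    exact mul_left_cancel₀ (ne_of_gt h0) (hrec2 j)
  have step : ∀ j : ℤ, |d j| ≤ 2/5 → |d (j+1)| ≤ 1/4 →
      |d (j+2)| ≤ 2/5 ∧ |d (j+3)| ≤ 1/4 := by
    intro j hA hB
    have hsub : ∀ x y : ℝ, |x - y| ≤ |x| + |y| := fun x y => abs_sub _ _
    have hco : |α - α^2| = α^2 - α := by
      rw [abs_of_nonpos (by nlinarith)]; ring
    constructor
    · refine absmul α _ _ hal (by norm_num) ?_
      rw [hrec j]
      calc |(α - α^2) * d (j+1) - d j| ≤ |(α - α^2) * d (j+1)| + |d j| := hsub _ _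
        _ = (α^2 - α) * |d (j+1)| + |d j| := by rw [abs_mul, hco]
        _ ≤ (α^2 - α) * (1/4) + 2/5 := by
            have := mul_le_mul_of_nonneg_left hB (show (0:ℝ) ≤ α^2 - α by nlinarith)
            linarith
        _ ≤ 1.465 * (2/5) := by nlinarith
    · refine absmul α _ _ hal (by norm_num) ?_
      rw [hrec2' j]
      calc |(α - α^2) * d (j+1) + (α-1) * d j|
          ≤ |(α - α^2) * d (j+1)| + |(α-1) * d j| := abs_add_le _ _
        _ = (α^2 - α) * |d (j+1)| + (α-1) * |d j| := by
            rw [abs_mul, abs_mul, hco, abs_of_nonneg (show (0:ℝ) ≤ α - 1 by linarith)]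
        _ ≤ (α^2 - α) * (1/4) + (α-1) * (2/5) := by
            have h1 := mul_le_mul_of_nonneg_left hB (show (0:ℝ) ≤ α^2 - α by nlinarith)
            have h2 := mul_le_mul_of_nonneg_left hA (show (0:ℝ) ≤ α - 1 by linarith)
            linarith
        _ ≤ 1.465 * (1/4) := by nlinarith
  have main : ∀ m : ℕ, |d (j0 + 2*m)| ≤ 2/5 ∧ |d (j0 + 2*m + 1)| ≤ 1/4 := by
    intro m
    induction m with
    | zero => norm_num; exact ⟨hA0, hB0⟩
    | succ m ih =>
      obtain ⟨h1, h2⟩ := step (j0 + 2*m) ih.1 ih.2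
      constructor
      · rw [show j0 + 2*((m+1:ℕ):ℤ) = j0 + 2*m + 2 by push_cast; ring]; exact h1
      · rw [show j0 + 2*((m+1:ℕ):ℤ) + 1 = j0 + 2*m + 3 by push_cast; ring]; exact h2
  intro j hj
  rcases Int.even_or_odd (j - j0) with ⟨k, hk⟩ | ⟨k, hk⟩
  · have hk0 : 0 ≤ k := by omega
    lift k to ℕ using hk0
    have := (main k).1
    rw [show j0 + 2*(k:ℤ) = j by omega] at this
    exact this
  · have hk0 : 0 ≤ k := by omega
    lift k to ℕ using hk0
    have := (main k).2
    rw [show j0 + 2*(k:ℤ) + 1 = j by omega] at this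
    linarith

section
variable (N : ℤ → ℤ) (hN0 : N 0 = 0) (hN1 : N 1 = 0) (hN2 : N 2 = 1)
  (hNrec : ∀ k : ℤ, N (k + 3) = N (k + 2) + N k)
  (α : ℝ) (hal : 1.465 < α) (hau : α < 1.466) (hα : α ^ 3 = α ^ 2 + 1)

include hNrec hα in
lemma del_rec (j : ℤ) : α * del N α (j+2) = (α - α^2) * del N α (j+1) - del N α j := by
  have h : ((N (j+2) : ℝ)) = N (j+1) + N (j-1) := by
    have := hNrec (j-1)
    rw [show j-1+3 = j+2 by ring, show j-1+2 = j+1 by ring] at this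
    exact_mod_cast this
  simp only [del, show j+2-1 = j+1 by ring, show j+1-1 = j by ring]
  linear_combination α * h - (N j : ℝ) * hα

include hNrec hα in
lemma gam_rec (j : ℤ) : α * gam N α (j+2) = (α - α^2) * gam N α (j+1) - gam N α j := by
  have h2 : ((N (j+2) : ℝ)) = N (j+1) + N (j-1) := by
    have := hNrec (j-1)
    rw [show j-1+3 = j+2 by ring, show j-1+2 = j+1 by ring] at this
    exact_mod_cast this
  have h1 : ((N (j+1) : ℝ)) = N j + N (j-2) := by
    have := hNrec (j-2)
    rw [show j-2+3 = j+1 by ring, show j-2+2 = j by ring] at this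
    exact_mod_cast this
  have h0 : ((N j : ℝ)) = N (j-1) + N (j-3) := by
    have := hNrec (j-3)
    rw [show j-3+3 = j by ring, show j-3+2 = j-1 by ring] at this
    exact_mod_cast this
  simp only [gam, show j+2-3 = j-1 by ring, show j+1-3 = j-2 by ring]
  linear_combination α * h2 + α^2 * h1 + (1+α^2) * h0 -
    ((α+1) * (N (j-1):ℝ) + α^2 * (N (j-2):ℝ) + (N (j-3) : ℝ)) * hα

include hN0 hN1 hN2 hNrec hal hau in
lemma del_pair (hbox : ∀ i : ℤ, 7 ≤ i → |del N α i| ≤ 2/5) :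
    ∀ i : ℤ, -1 ≤ i → ∀ t u : ℝ, 0 ≤ t → t < 1 → 0 ≤ u → u < 1 →
      del N α i * t + del N α (i+2) * u < 1 := by
  have e1 := hNrec (-1); have e2 := hNrec (-2)
  have f0 := hNrec 0; have f1 := hNrec 1; have f2 := hNrec 2; have f3 := hNrec 3
  have f4 := hNrec 4; have f5 := hNrec 5
  norm_num at e1 e2 f0 f1 f2 f3 f4 f5
  have hm2 : N (-2) = 0 := by omega
  have hm1 : N (-1) = 1 := by omega
  have h3 : N 3 = 1 := by omega
  have h4 : N 4 = 1 := by omega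
  have h5 : N 5 = 2 := by omega
  have h6 : N 6 = 3 := by omega
  have h7 : N 7 = 4 := by omega
  have h8 : N 8 = 6 := by omega
  have dm1 : del N α (-1) = 1 := by simp [del]; norm_num [hm1, hm2]
  have d0 : del N α 0 = -α := by simp [del]; norm_num [hN0, hm1]
  have d1 : del N α 1 = 0 := by simp [del]; norm_num [hN1, hN0]
  have d2 : del N α 2 = 1 := by simp [del]; norm_num [hN2, hN1]
  have d3 : del N α 3 = 1 - α := by simp [del]; norm_num [h3, hN2]
  have d4 : del N α 4 = 1 - α := by simp [del]; norm_num [h4, h3]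
  have d5 : del N α 5 = 2 - α := by simp [del]; norm_num [h5, h4]
  have d6 : del N α 6 = 3 - 2*α := by simp [del]; norm_num [h6, h5]; ring
  have d7 : del N α 7 = 4 - 3*α := by simp [del]; norm_num [h7, h6]; ring
  have d8 : del N α 8 = 6 - 4*α := by simp [del]; norm_num [h8, h7]; ring
  intro i hi t u ht0 ht1 hu0 hu1
  rcases le_or_gt i 6 with hle | hgt
  · interval_cases i <;> norm_num
    · rw [dm1, d1]; linarith
    · rw [d0, d2]
      have := hn (-α) t (by linarith) ht0; linarith
    · rw [d1, d3]
      have := hn (1-α) u (by linarith) hu0; linarith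
    · rw [d2, d4]
      have := hn (1-α) u (by linarith) hu0; linarith
    · rw [d3, d5]
      have := hn (1-α) t (by linarith) ht0
      have := hp (2-α) u (by linarith) hu0 hu1.le; linarith
    · rw [d4, d6]
      have := hn (1-α) t (by linarith) ht0
      have := hp (3-2*α) u (by linarith) hu0 hu1.le; linarith
    · rw [d5, d7]
      have := hp (2-α) t (by linarith) ht0 ht1.le
      have := hn (4-3*α) u (by linarith) hu0; linarith
    · rw [d6, d8]
      have := hp (3-2*α) t (by linarith) ht0 ht1.le
      have := hp (6-4*α) u (by linarith) hu0 hu1.le; linarith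
  · have b1 := hbox i (by omega)
    have b2 := hbox (i+2) (by omega)
    rw [abs_le] at b1 b2
    have p1 := mul_le_mul_of_nonneg_right b1.2 ht0
    have p2 := mul_le_mul_of_nonneg_right b2.2 hu0
    linarith only [p1, p2, ht0, ht1, hu0, hu1]

include hN0 hN1 hN2 hNrec hal hau hα in
lemma gam_pair (hbox : ∀ i : ℤ, 12 ≤ i → |gam N α i| ≤ 2/5) :
    ∀ i : ℤ, 1 ≤ i → ∀ t u : ℝ, 0 ≤ t → t < 1 → 0 ≤ u → u < 1 →
      gam N α i * t + gam N α (i+2) * u < 1 := by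
  have ha2l : 2.14 < α^2 := by nlinarith
  have ha2u : α^2 < 2.15 := by nlinarith
  have ha3l : 3.14 < α^3 := by rw [hα]; linarith
  have ha3u : α^3 < 3.15 := by rw [hα]; linarith
  have e1 := hNrec (-1); have e2 := hNrec (-2)
  have f0 := hNrec 0; have f1 := hNrec 1; have f2 := hNrec 2; have f3 := hNrec 3
  have f4 := hNrec 4; have f5 := hNrec 5; have f6 := hNrec 6; have f7 := hNrec 7
  have f8 := hNrec 8; have f9 := hNrec 9; have f10 := hNrec 10
  norm_num at e1 e2 f0 f1 f2 f3 f4 f5 f6 f7 f8 f9 f10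
  have hm2 : N (-2) = 0 := by omega
  have hm1 : N (-1) = 1 := by omega
  have h3 : N 3 = 1 := by omega
  have h4 : N 4 = 1 := by omega
  have h5 : N 5 = 2 := by omega
  have h6 : N 6 = 3 := by omega
  have h7 : N 7 = 4 := by omega
  have h8 : N 8 = 6 := by omega
  have h9 : N 9 = 9 := by omega
  have h10 : N 10 = 13 := by omega
  have h11 : N 11 = 19 := by omega
  have h12 : N 12 = 28 := by omega
  have h13 : N 13 = 41 := by omega
  have g1 : gam N α 1 = 0 := by simp [gam]; norm_num [hN1, hm2]
  have g2 : gam N α 2 = 1 - α^3 := by simp [gam]; norm_num [hN2, hm1]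
  have g3 : gam N α 3 = 1 := by simp [gam]; norm_num [h3, hN0]
  have g4 : gam N α 4 = 1 := by simp [gam]; norm_num [h4, hN1]
  have g5 : gam N α 5 = 2 - α^3 := by simp [gam]; norm_num [h5, hN2]
  have g6 : gam N α 6 = 3 - α^3 := by simp [gam]; norm_num [h6, h3]
  have g7 : gam N α 7 = 4 - α^3 := by simp [gam]; norm_num [h7, h4]
  have g8 : gam N α 8 = 6 - 2*α^3 := by simp [gam]; norm_num [h8, h5]; ring
  have g9 : gam N α 9 = 9 - 3*α^3 := by simp [gam]; norm_num [h9, h6]; ring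
  have g10 : gam N α 10 = 13 - 4*α^3 := by simp [gam]; norm_num [h10, h7]; ring
  have g11 : gam N α 11 = 19 - 6*α^3 := by simp [gam]; norm_num [h11, h8]; ring
  have g12 : gam N α 12 = 28 - 9*α^3 := by simp [gam]; norm_num [h12, h9]; ring
  have g13 : gam N α 13 = 41 - 13*α^3 := by simp [gam]; norm_num [h13, h10]; ring
  intro i hi t u ht0 ht1 hu0 hu1
  rcases le_or_gt i 11 with hle | hgt
  · interval_cases i <;> norm_num
    · rw [g1, g3]; linarith
    · rw [g2, g4]
      have := hn (1-α^3) t (by linarith) ht0; linarith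
    · rw [g3, g5]
      have := hn (2-α^3) u (by linarith) hu0; linarith
    · rw [g4, g6]
      have := hn (3-α^3) u (by linarith) hu0; linarith
    · rw [g5, g7]
      have := hn (2-α^3) t (by linarith) ht0
      have := hp (4-α^3) u (by linarith) hu0 hu1.le; linarith
    · rw [g6, g8]
      have := hn (3-α^3) t (by linarith) ht0
      have := hn (6-2*α^3) u (by linarith) hu0; linarith
    · rw [g7, g9]
      have := hp (4-α^3) t (by linarith) ht0 ht1.le
      have := hn (9-3*α^3) u (by linarith) hu0; linarith
    · rw [g8, g10]
      have := hn (6-2*α^3) t (by linarith) ht0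
      have := hp (13-4*α^3) u (by linarith) hu0 hu1.le; linarith
    · rw [g9, g11]
      have := hn (9-3*α^3) t (by linarith) ht0
      have := hp (19-6*α^3) u (by linarith) hu0 hu1.le; linarith
    · rw [g10, g12]
      have := hp (13-4*α^3) t (by linarith) ht0 ht1.le
      have := hn (28-9*α^3) u (by linarith) hu0; linarith
    · rw [g11, g13]
      have := hp (19-6*α^3) t (by linarith) ht0 ht1.le
      have := hp (41-13*α^3) u (by linarith) hu0 hu1.le; linarith
  · have b1 := hbox i (by omega)
    have b2 := hbox (i+2) (by omega)
    rw [abs_le] at b1 b2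
    have p1 := mul_le_mul_of_nonneg_right b1.2 ht0
    have p2 := mul_le_mul_of_nonneg_right b2.2 hu0
    linarith only [p1, p2, ht0, ht1, hu0, hu1]

include hNrec hα in
lemma keyid (a b : ℕ → ℕ) (j : ℤ) (n : ℕ) :
    ((NB N a b (j+1) n : ℝ) - α * NB N a b j n
      = -(del N α (j-1) * ((n:ℝ)*α - a n) + del N α (j+1) * ((n:ℝ)*α^3 - b n))) ∧
    ((NB N a b (j+3) n : ℝ) - α^3 * NB N a b j n
      = -(gam N α (j+1) * ((n:ℝ)*α - a n) + gam N α (j+3) * ((n:ℝ)*α^3 - b n))) := by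
  have R1 : ((N j : ℝ)) = N (j-1) + N (j-3) := by
    have := hNrec (j-3)
    rw [show j-3+3 = j by ring, show j-3+2 = j-1 by ring] at this
    exact_mod_cast this
  have R2 : ((N (j+1) : ℝ)) = N j + N (j-2) := by
    have := hNrec (j-2)
    rw [show j-2+3 = j+1 by ring, show j-2+2 = j by ring] at this
    exact_mod_cast this
  have R3 : ((N (j+2) : ℝ)) = N (j+1) + N (j-1) := by
    have := hNrec (j-1)
    rw [show j-1+3 = j+2 by ring, show j-1+2 = j+1 by ring] at this
    exact_mod_cast this
  have R4 : ((N (j+3) : ℝ)) = N (j+2) + N j := by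
    have := hNrec j
    exact_mod_cast this
  constructor
  · simp only [NB, del, show j+1-2 = j-1 by ring, show j+1-3 = j-2 by ring,
      show j+1-1 = j by ring, show j-1-1 = j-2 by ring]
    push_cast
    rw [R2, R1]
    linear_combination ((n:ℝ) * (-α*((N (j-1):ℝ) + N (j-3)) + N (j-2))) * hα
  · simp only [NB, gam, show j+3-2 = j+1 by ring, show j+3-3 = j by ring,
      show j+1-3 = j-2 by ring]
    push_cast
    rw [R4, R3, R2, R1]
    linear_combination ((n:ℝ) * ((1-α-α^2-α^3)*((N (j-1):ℝ) + N (j-3)) - α * N (j-2))) * hα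

include hN0 hN1 hN2 hNrec in
lemma Nnonneg : ∀ i : ℤ, -2 ≤ i → 0 ≤ N i := by
  have hm1 : N (-1) = 1 := by have := hNrec (-1); norm_num at this; omega
  have hm2 : N (-2) = 0 := by have := hNrec (-2); norm_num at this; omega
  have key : ∀ m : ℕ, 0 ≤ N ((m : ℤ) - 2) := by
    intro m
    induction m using Nat.strong_induction_on with
    | _ m ih =>
      match m, ih with
      | 0, _ => simpa using hm2.ge
      | 1, _ => simp [hm1]
      | 2, _ => simp [hN0]
      | (m+3), ih =>
        have h := hNrec ((m : ℤ) - 2)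
        have h1 := ih (m+2) (by omega)
        have h2 := ih m (by omega)
        push_cast at h1 h2 ⊢
        rw [show ((m:ℤ) + 3 - 2 : ℤ) = ((m:ℤ) - 2) + 3 by ring, h,
          show ((m:ℤ) - 2) + 2 = (m:ℤ) + 2 - 2 by ring]
        omega
  intro i hi
  have : i = ((i + 2).toNat : ℤ) - 2 := by omega
  rw [this]; exact key _
end

/-- **Theorem 6, case q = 3.** Let `N` be the ℤ-indexed Narayana sequence,
`α` the real root greater than `1` of `x³ − x² − 1`, `a(n) = ⌊nα⌋`, `b(n) = ⌊nα³⌋`.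
For a composite function `f = ℓ₁ ∘ ⋯ ∘ ℓ_s` of `x` functions `a` and `y` functions `b`
(encoded by a list of booleans, `true` for `a` and `false` for `b`), there is a constant
`C ≥ 0` with `0 ≤ N_{x+3y−2}·a(n) + N_{x+3y}·b(n) − N_{x+3y−3}·n − f(n) ≤ C` for all
`n ≥ 1`. -/
theorem narayana_beatty_composite
    (N : ℤ → ℤ) (hN0 : N 0 = 0) (hN1 : N 1 = 0) (hN2 : N 2 = 1)
    (hNrec : ∀ k : ℤ, N (k + 3) = N (k + 2) + N k)
    (α : ℝ) (hα1 : 1 < α) (hα : α ^ 3 = α ^ 2 + 1)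
    (a b : ℕ → ℕ)
    (ha : ∀ n : ℕ, (a n : ℤ) = ⌊(n : ℝ) * α⌋)
    (hb : ∀ n : ℕ, (b n : ℤ) = ⌊(n : ℝ) * α ^ 3⌋)
    (L : List Bool) (hL : 1 ≤ L.length) :
    ∃ C : ℤ, 0 ≤ C ∧ ∀ n : ℕ, 1 ≤ n →
      (0 ≤ N ((L.count true : ℤ) + 3 * (L.count false : ℤ) - 2) * (a n : ℤ)
            + N ((L.count true : ℤ) + 3 * (L.count false : ℤ)) * (b n : ℤ)
            - N ((L.count true : ℤ) + 3 * (L.count false : ℤ) - 3) * (n : ℤ)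
            - ((L.foldr (fun t (m : ℕ) => if t then a m else b m) n : ℕ) : ℤ)) ∧
      (N ((L.count true : ℤ) + 3 * (L.count false : ℤ) - 2) * (a n : ℤ)
            + N ((L.count true : ℤ) + 3 * (L.count false : ℤ)) * (b n : ℤ)
            - N ((L.count true : ℤ) + 3 * (L.count false : ℤ) - 3) * (n : ℤ)
            - ((L.foldr (fun t (m : ℕ) => if t then a m else b m) n : ℕ) : ℤ) ≤ C) := by
  have hal : 1.465 < α := by nlinarith [sq_nonneg (α - 1.465), sq_nonneg α, sq_nonneg (α-1)]
  have hau : α < 1.466 := by nlinarith [sq_nonneg (α - 1.466), sq_nonneg α, sq_nonneg (α-1)]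
  have hα0 : (0:ℝ) < α := by linarith
  have ha3l : 3.14 < α^3 := by nlinarith
  have ha3u : α^3 < 3.15 := by nlinarith
  have hNN := Nnonneg N hN0 hN1 hN2 hNrec
  -- the two contraction boxes
  have hboxd : ∀ i : ℤ, 7 ≤ i → |del N α i| ≤ 2/5 := by
    have f3 := hNrec 3; have f4 := hNrec 4; have f5 := hNrec 5
    have e1 := hNrec (-1); have e2 := hNrec (-2)
    have f0 := hNrec 0; have f1 := hNrec 1; have f2 := hNrec 2
    norm_num at e1 e2 f0 f1 f2 f3 f4 f5
    have h6 : N 6 = 3 := by omega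
    have h7 : N 7 = 4 := by omega
    have h8 : N 8 = 6 := by omega
    refine box α hal hau hα (del N α) (del_rec N hNrec α hα) 7 ?_ ?_
    · have hv : del N α 7 = 4 - 3*α := by simp [del]; norm_num [h7, h6]; ring
      rw [hv, abs_le]; constructor <;> linarith
    · have hv : del N α 8 = 6 - 4*α := by simp [del]; norm_num [h8, h7]; ring
      rw [show (7:ℤ)+1 = 8 by norm_num, hv, abs_le]; constructor <;> linarith
  have hboxg : ∀ i : ℤ, 12 ≤ i → |gam N α i| ≤ 2/5 := by
    have e1 := hNrec (-1); have e2 := hNrec (-2)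
    have f0 := hNrec 0; have f1 := hNrec 1; have f2 := hNrec 2; have f3 := hNrec 3
    have f4 := hNrec 4; have f5 := hNrec 5; have f6 := hNrec 6; have f7 := hNrec 7
    have f8 := hNrec 8; have f9 := hNrec 9; have f10 := hNrec 10
    norm_num at e1 e2 f0 f1 f2 f3 f4 f5 f6 f7 f8 f9 f10
    have h9 : N 9 = 9 := by omega
    have h10 : N 10 = 13 := by omega
    have h12 : N 12 = 28 := by omega
    have h13 : N 13 = 41 := by omega
    refine box α hal hau hα (gam N α) (gam_rec N hNrec α hα) 12 ?_ ?_
    · have hv : gam N α 12 = 28 - 9*α^3 := by simp [gam]; norm_num [h12, h9]; ring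
      rw [hv, abs_le]; constructor <;> linarith
    · have hv : gam N α 13 = 41 - 13*α^3 := by simp [gam]; norm_num [h13, h10]; ring
      rw [show (12:ℤ)+1 = 13 by norm_num, hv, abs_le]; constructor <;> linarith
  have hdp := del_pair N hN0 hN1 hN2 hNrec α hal hau hboxd
  have hgp := gam_pair N hN0 hN1 hN2 hNrec α hal hau hα hboxg
  clear hboxd hboxg
  have hm2 : N (-2) = 0 := by have := hNrec (-2); norm_num at this; omega
  have hm3 : N (-3) = -1 := by
    have t1 := hNrec (-3); have t2 := hNrec (-1); norm_num at t1 t2; omega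
  -- fractional part facts
  have hfrac : ∀ n : ℕ, 0 ≤ (n:ℝ)*α - a n ∧ (n:ℝ)*α - a n < 1
      ∧ 0 ≤ (n:ℝ)*α^3 - b n ∧ (n:ℝ)*α^3 - b n < 1 := by
    intro n
    have h1 : ((a n : ℝ)) = ((⌊(n : ℝ) * α⌋ : ℤ) : ℝ) := by exact_mod_cast ha n
    have h2 : ((b n : ℝ)) = ((⌊(n : ℝ) * α^3⌋ : ℤ) : ℝ) := by exact_mod_cast hb n
    rw [h1, h2]
    refine ⟨by linarith [Int.floor_le ((n:ℝ)*α)], by linarith [Int.lt_floor_add_one ((n:ℝ)*α)],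
      by linarith [Int.floor_le ((n:ℝ)*α^3)], by linarith [Int.lt_floor_add_one ((n:ℝ)*α^3)]⟩
  -- main induction on the list
  have claim : ∀ L' : List Bool, ∃ C : ℤ, 0 ≤ C ∧ ∀ n : ℕ, 1 ≤ n →
      1 ≤ L'.foldr (fun t (m : ℕ) => if t then a m else b m) n ∧
      (((L'.foldr (fun t (m : ℕ) => if t then a m else b m) n : ℕ) : ℤ)
         ≤ NB N a b ((L'.count true : ℤ) + 3 * (L'.count false : ℤ)) n ∧
       NB N a b ((L'.count true : ℤ) + 3 * (L'.count false : ℤ)) n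
         - ((L'.foldr (fun t (m : ℕ) => if t then a m else b m) n : ℕ) : ℤ) ≤ C) := by
    intro L'
    induction L' with
    | nil =>
      refine ⟨0, le_refl _, fun n hn => ?_⟩
      have hidx : ((([]:List Bool).count true : ℤ) + 3 * (([]:List Bool).count false : ℤ))
          = 0 := by simp
      rw [hidx]
      have hNB : NB N a b 0 n = n := by
        simp only [NB]; norm_num [hm2, hN0, hm3]
      simp only [List.foldr_nil, hNB]
      exact ⟨hn, by omega, by omega⟩
    | cons hd tl ih =>
      obtain ⟨C', hC0', hIH⟩ := ih
      obtain ⟨j, hjdef⟩ : ∃ j : ℤ, j = (tl.count true : ℤ) + 3 * (tl.count false : ℤ) :=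
        ⟨_, rfl⟩
      rw [← hjdef] at hIH
      have hj0 : 0 ≤ j := by rw [hjdef]; positivity
      have hNj2 := hNN (j-2) (by omega)
      have hNj1 := hNN (j-1) (by omega)
      have hNj := hNN j (by omega)
      have hNjp1 := hNN (j+1) (by omega)
      have hNj3 := hNN (j+3) (by omega)
      have hN2R : (0:ℝ) ≤ (N (j-2):ℝ) := by exact_mod_cast hNj2
      have hN1R : (0:ℝ) ≤ (N (j-1):ℝ) := by exact_mod_cast hNj1
      have hNjR : (0:ℝ) ≤ (N j:ℝ) := by exact_mod_cast hNj
      have hNp1R : (0:ℝ) ≤ (N (j+1):ℝ) := by exact_mod_cast hNjp1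
      have hC'R : (0:ℝ) ≤ (C':ℝ) := by exact_mod_cast hC0'
      refine ⟨4*(C' + N (j-2) + N j) + 1, by omega, fun n hn => ?_⟩
      obtain ⟨hm1', hm2', hm3'⟩ := hIH n hn
      obtain ⟨m, hmdef⟩ : ∃ m : ℕ,
          m = tl.foldr (fun t (m : ℕ) => if t then a m else b m) n := ⟨_, rfl⟩
      rw [← hmdef] at hm1' hm2' hm3'
      have hmRb : (m:ℝ) ≤ (NB N a b j n : ℝ) := by exact_mod_cast hm2'
      have hmRa : (NB N a b j n : ℝ) - C' ≤ (m:ℝ) := by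
        have h' : (NB N a b j n : ℤ) - C' ≤ (m:ℤ) := by omega
        exact_mod_cast h'
      have hm1R : (1:ℝ) ≤ (m:ℝ) := by exact_mod_cast hm1'
      have kid := keyid N hNrec α hα a b j n
      have hfr := hfrac n
      have hafm : ((a m : ℝ)) = ((⌊(m : ℝ) * α⌋ : ℤ) : ℝ) := by exact_mod_cast ha m
      have hbfm : ((b m : ℝ)) = ((⌊(m : ℝ) * α^3⌋ : ℤ) : ℝ) := by exact_mod_cast hb m
      cases hd with
      | true =>
        have hk : ((true :: tl).count true : ℤ) + 3 * ((true :: tl).count false : ℤ)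
            = j + 1 := by
          rw [hjdef]; simp [List.count_cons]; push_cast; ring
        have hfold : (true :: tl).foldr (fun t (m : ℕ) => if t then a m else b m) n
            = a m := by rw [hmdef]; simp
        rw [hk, hfold]
        have hpair := hdp (j-1) (by omega) _ _ hfr.1 hfr.2.1 hfr.2.2.1 hfr.2.2.2
        rw [show j-1+2 = j+1 by ring] at hpair
        have hlow : α * (NB N a b j n : ℝ) - 1 < NB N a b (j+1) n := by
          linarith only [kid.1, hpair]
        have hb1 : -del N α (j-1) * ((n:ℝ)*α - a n) ≤ 2*(N (j-2):ℝ) := by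
          refine prodbound _ _ _ ?_ (by linarith) hfr.1 hfr.2.1.le
          simp only [del, show j-1-1 = j-2 by ring]
          have hprod : (0:ℝ) ≤ (2 - α) * (N (j-2):ℝ) :=
            mul_nonneg (by linarith) hN2R
          linarith only [hprod, hN1R]
        have hb2 : -del N α (j+1) * ((n:ℝ)*α^3 - b n) ≤ 2*(N j:ℝ) := by
          refine prodbound _ _ _ ?_ (by linarith) hfr.2.2.1 hfr.2.2.2.le
          simp only [del, show j+1-1 = j by ring]
          have hprod : (0:ℝ) ≤ (2 - α) * (N j:ℝ) := mul_nonneg (by linarith) hNjR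
          linarith only [hprod, hNp1R]
        have hup : (NB N a b (j+1) n : ℝ) ≤ α * NB N a b j n
            + 2*(N (j-2):ℝ) + 2*(N j : ℝ) := by
          linarith only [kid.1, hb1, hb2]
        have hg1 : 1 ≤ a m := by
          have h' : (1:ℤ) ≤ (a m : ℤ) := by
            rw [ha m]
            refine Int.le_floor.2 ?_
            push_cast
            have := mul_le_mul_of_nonneg_right hm1R hα0.le
            linarith only [this, hal]
          exact_mod_cast h'
        refine ⟨hg1, ?_, ?_⟩
        · have h1 : ((a m:ℝ)) ≤ (m:ℝ)*α := by
            rw [hafm]; exact Int.floor_le _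
          have h2 : (m:ℝ)*α ≤ (NB N a b j n : ℝ) * α :=
            mul_le_mul_of_nonneg_right hmRb hα0.le
          have hreal : ((a m : ℝ)) < (NB N a b (j+1) n : ℝ) + 1 := by
            linarith only [h1, h2, hlow]
          have h' : (a m : ℤ) < NB N a b (j+1) n + 1 := by exact_mod_cast hreal
          omega
        · have h1 : (m:ℝ)*α - 1 < a m := by
            rw [hafm]; linarith [Int.lt_floor_add_one ((m:ℝ)*α)]
          have h2 : ((NB N a b j n : ℝ) - C') * α ≤ (m:ℝ)*α :=
            mul_le_mul_of_nonneg_right hmRa hα0.le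
          have hCprod : (0:ℝ) ≤ (2 - α) * (C':ℝ) := mul_nonneg (by linarith) hC'R
          have hreal : (NB N a b (j+1) n : ℝ) - (a m : ℝ)
              < ((4*(C' + N (j-2) + N j) + 1 : ℤ) : ℝ) := by
            push_cast
            linarith only [hup, h1, h2, hCprod, hN2R, hNjR, hC'R]
          have h' : NB N a b (j+1) n - (a m : ℤ) < 4*(C' + N (j-2) + N j) + 1 := by
            exact_mod_cast hreal
          omega
      | false =>
        have hk : ((false :: tl).count true : ℤ) + 3 * ((false :: tl).count false : ℤ)
            = j + 3 := by
          rw [hjdef]; simp [List.count_cons]; push_cast; ring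
        have hfold : (false :: tl).foldr (fun t (m : ℕ) => if t then a m else b m) n
            = b m := by rw [hmdef]; simp
        rw [hk, hfold]
        have hpair := hgp (j+1) (by omega) _ _ hfr.1 hfr.2.1 hfr.2.2.1 hfr.2.2.2
        rw [show j+1+2 = j+3 by ring] at hpair
        have hlow : α^3 * (NB N a b j n : ℝ) - 1 < NB N a b (j+3) n := by
          linarith only [kid.2, hpair]
        have hb1 : -gam N α (j+1) * ((n:ℝ)*α - a n) ≤ 4*(N (j-2):ℝ) := by
          refine prodbound _ _ _ ?_ (by linarith) hfr.1 hfr.2.1.le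
          simp only [gam, show j+1-3 = j-2 by ring]
          have hprod : (0:ℝ) ≤ (4 - α^3) * (N (j-2):ℝ) :=
            mul_nonneg (by linarith) hN2R
          linarith only [hprod, hNp1R]
        have hb2 : -gam N α (j+3) * ((n:ℝ)*α^3 - b n) ≤ 4*(N j:ℝ) := by
          refine prodbound _ _ _ ?_ (by linarith) hfr.2.2.1 hfr.2.2.2.le
          simp only [gam, show j+3-3 = j by ring]
          have hN3R : (0:ℝ) ≤ (N (j+3):ℝ) := by exact_mod_cast hNj3
          have hprod : (0:ℝ) ≤ (4 - α^3) * (N j:ℝ) := mul_nonneg (by linarith) hNjR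
          linarith only [hprod, hN3R]
        have hup : (NB N a b (j+3) n : ℝ) ≤ α^3 * NB N a b j n
            + 4*(N (j-2):ℝ) + 4*(N j : ℝ) := by
          linarith only [kid.2, hb1, hb2]
        have hg1 : 1 ≤ b m := by
          have h' : (1:ℤ) ≤ (b m : ℤ) := by
            rw [hb m]
            refine Int.le_floor.2 ?_
            push_cast
            have := mul_le_mul_of_nonneg_right hm1R (show (0:ℝ) ≤ α^3 by linarith)
            linarith only [this, ha3l]
          exact_mod_cast h'
        refine ⟨hg1, ?_, ?_⟩
        · have h1 : ((b m:ℝ)) ≤ (m:ℝ)*α^3 := by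
            rw [hbfm]; exact Int.floor_le _
          have h2 : (m:ℝ)*α^3 ≤ (NB N a b j n : ℝ) * α^3 :=
            mul_le_mul_of_nonneg_right hmRb (by linarith)
          have hreal : ((b m : ℝ)) < (NB N a b (j+3) n : ℝ) + 1 := by
            linarith only [h1, h2, hlow]
          have h' : (b m : ℤ) < NB N a b (j+3) n + 1 := by exact_mod_cast hreal
          omega
        · have h1 : (m:ℝ)*α^3 - 1 < b m := by
            rw [hbfm]; linarith [Int.lt_floor_add_one ((m:ℝ)*α^3)]
          have h2 : ((NB N a b j n : ℝ) - C') * α^3 ≤ (m:ℝ)*α^3 :=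
            mul_le_mul_of_nonneg_right hmRa (by linarith)
          have hCprod : (0:ℝ) ≤ (4 - α^3) * (C':ℝ) := mul_nonneg (by linarith) hC'R
          have hreal : (NB N a b (j+3) n : ℝ) - (b m : ℝ)
              < ((4*(C' + N (j-2) + N j) + 1 : ℤ) : ℝ) := by
            push_cast
            linarith only [hup, h1, h2, hCprod, hN2R, hNjR, hC'R]
          have h' : NB N a b (j+3) n - (b m : ℤ) < 4*(C' + N (j-2) + N j) + 1 := by
            exact_mod_cast hreal
          omega
  obtain ⟨C, hC0, hC⟩ := claim L
  refine ⟨C, hC0, fun n hn => ?_⟩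
  obtain ⟨h1, h2, h3⟩ := hC n hn
  constructor
  · simp only [NB] at h2; linarith only [h2]
  · simp only [NB] at h3; linarith only [h3]
end

section
/- For every integer n ≥ 1, p_n = c_n(parts ≡ q−1 (mod q)), i.e., p_n equals the number of compositions of n all of whose parts are congruent to q−1 modulo q. -/
namespace Padovan15

def Cset (q n : ℕ) : Set (List ℕ) := {l : List ℕ | (∀ x ∈ l, x % q = q - 1) ∧ l.sum = n}

def Fmap (q : ℕ) : List ℕ → List ℕ
  | [] => []
  | a :: t => (a + q) :: t

lemma Cset_finite {q : ℕ} (hq : 2 ≤ q) (n : ℕ) : (Cset q n).Finite := by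
  rw [← Set.finite_coe_iff]
  refine Finite.of_injective
    (fun l => (⟨l.1, fun {i} hi => by
        have h1 : i % q = q - 1 := l.2.1 i hi
        have h2 : i % q ≤ i := Nat.mod_le i q
        omega, l.2.2⟩ : Composition n)) ?_
  intro a b hab
  exact Subtype.ext (congrArg Composition.blocks hab)

lemma Cset_empty {q n : ℕ} (h1 : 1 ≤ n) (h2 : n < q - 1) :
    Cset q n = ∅ := by
  ext l
  simp only [Cset, Set.mem_setOf_eq, Set.mem_empty_iff_false, iff_false]
  rintro ⟨hmod, hsum⟩
  match l with
  | [] => simp at hsum; omega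
  | a :: t =>
    simp only [List.sum_cons] at hsum
    have ha : a % q = q - 1 := hmod a (by simp)
    have ha2 : a % q ≤ a := Nat.mod_le a q
    omega

lemma Cset_singleton {q : ℕ} (hq : 2 ≤ q) : Cset q (q - 1) = {[q - 1]} := by
  ext l
  simp only [Cset, Set.mem_setOf_eq, Set.mem_singleton_iff]
  constructor
  · rintro ⟨hmod, hsum⟩
    match l with
    | [] => simp at hsum; omega
    | a :: t =>
      simp only [List.sum_cons] at hsum
      have h1 : a % q = q - 1 := hmod a (by simp)
      have h2 : a % q ≤ a := Nat.mod_le a q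
      have ha : a = q - 1 := by omega
      have ht : t.sum = 0 := by omega
      have ht' : t = [] := by
        match t with
        | [] => rfl
        | b :: s =>
          have hb1 : b % q = q - 1 := hmod b (by simp)
          have hb2 : b % q ≤ b := Nat.mod_le b q
          simp only [List.sum_cons] at ht
          omega
      simp [ha, ht']
  · rintro rfl
    refine ⟨fun x hx => ?_, by simp⟩
    have : x = q - 1 := by simpa using hx
    subst this
    exact Nat.mod_eq_of_lt (by omega)

lemma Cset_key {q : ℕ} (hq : 2 ≤ q) {n : ℕ} (hn : 1 ≤ n) :
    Cset q (n + q) = (List.cons (q - 1)) '' Cset q (n + 1) ∪ Fmap q '' Cset q n := by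
  ext l
  constructor
  · rintro ⟨hmod, hsum⟩
    match l with
    | [] => simp at hsum; omega
    | a :: t =>
      simp only [List.sum_cons] at hsum
      have h1 : a % q = q - 1 := hmod a (by simp)
      have h2 : a % q ≤ a := Nat.mod_le a q
      by_cases hc : a = q - 1
      · left
        exact ⟨t, ⟨fun x hx => hmod x (by simp [hx]), by omega⟩, by rw [hc]⟩
      · right
        have haq : q ≤ a := by
          by_contra h
          push_neg at h
          rw [Nat.mod_eq_of_lt h] at h1
          exact hc h1
        refine ⟨(a - q) :: t, ⟨?_, ?_⟩, ?_⟩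
        · intro x hx
          rcases List.mem_cons.mp hx with rfl | hx
          · have heq : a - q + q = a := by omega
            calc (a - q) % q = (a - q + q) % q := (Nat.add_mod_right _ _).symm
              _ = q - 1 := by rw [heq]; exact h1
          · exact hmod x (by simp [hx])
        · show ((a - q) :: t).sum = n
          simp only [List.sum_cons]; omega
        · show (a - q + q) :: t = a :: t
          congr 1
          omega
  · rintro (⟨m, ⟨hmod, hsum⟩, rfl⟩ | ⟨m, ⟨hmod, hsum⟩, rfl⟩)
    · refine ⟨fun x hx => ?_, ?_⟩
      · rcases List.mem_cons.mp hx with rfl | hx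
        · exact Nat.mod_eq_of_lt (by omega)
        · exact hmod x hx
      · simp only [List.sum_cons]; omega
    · match m with
      | [] => simp at hsum; omega
      | b :: t =>
        simp only [List.sum_cons] at hsum
        refine ⟨fun x hx => ?_, ?_⟩
        · have hx' : x ∈ (b + q) :: t := hx
          rcases List.mem_cons.mp hx' with rfl | hx''
          · show (b + q) % q = q - 1
            rw [Nat.add_mod_right]
            exact hmod b (by simp)
          · exact hmod x (by simp [hx''])
        · show ((b + q) :: t).sum = n + q
          simp only [List.sum_cons]; omega

lemma Cset_keyq {q : ℕ} (hq : 2 ≤ q) :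
    Cset q q = (List.cons (q - 1)) '' Cset q 1 := by
  ext l
  constructor
  · rintro ⟨hmod, hsum⟩
    match l with
    | [] => simp at hsum; omega
    | a :: t =>
      simp only [List.sum_cons] at hsum
      have h1 : a % q = q - 1 := hmod a (by simp)
      have h2 : a % q ≤ a := Nat.mod_le a q
      have hc : a = q - 1 := by
        by_contra hc
        have haq : q ≤ a := by
          by_contra h
          push_neg at h
          rw [Nat.mod_eq_of_lt h] at h1
          exact hc h1
        have h3 : (a - q) % q = q - 1 := by
          have heq : a - q + q = a := by omega
          calc (a - q) % q = (a - q + q) % q := (Nat.add_mod_right _ _).symm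
            _ = q - 1 := by rw [heq]; exact h1
        have h4 : (a - q) % q ≤ a - q := Nat.mod_le _ _
        omega
      exact ⟨t, ⟨fun x hx => hmod x (by simp [hx]), by omega⟩, by rw [hc]⟩
  · rintro ⟨m, ⟨hmod, hsum⟩, rfl⟩
    refine ⟨fun x hx => ?_, ?_⟩
    · rcases List.mem_cons.mp hx with rfl | hx
      · exact Nat.mod_eq_of_lt (by omega)
      · exact hmod x hx
    · simp only [List.sum_cons]; omega

lemma Fmap_injOn {q n : ℕ} (hn : 1 ≤ n) : Set.InjOn (Fmap q) (Cset q n) := by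
  rintro l1 hl1 l2 hl2 heq
  match l1, l2 with
  | [], _ => exact absurd hl1.2 (by simp; omega)
  | _ :: _, [] => exact absurd hl2.2 (by simp; omega)
  | a :: t, a' :: t' =>
    have : (a + q) :: t = (a' + q) :: t' := heq
    have h1 := List.head_eq_of_cons_eq this
    have h2 := List.tail_eq_of_cons_eq this
    have : a = a' := by omega
    simp [this, h2]

lemma ncard_key {q : ℕ} (hq : 2 ≤ q) {n : ℕ} (hn : 1 ≤ n) :
    (Cset q (n + q)).ncard = (Cset q (n + 1)).ncard + (Cset q n).ncard := by
  rw [Cset_key hq hn]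
  rw [Set.ncard_union_eq ?disj ((Cset_finite hq _).image _) ((Cset_finite hq _).image _)]
  · rw [Set.ncard_image_of_injOn (Set.injOn_of_injective (List.cons_injective)),
        Set.ncard_image_of_injOn (Fmap_injOn hn)]
  case disj =>
    rw [Set.disjoint_left]
    rintro l ⟨m, hm, rfl⟩ ⟨m', hm', hm'eq⟩
    match m' with
    | [] => exact absurd hm'.2 (by simp; omega)
    | b :: t =>
      have hb : b % q = q - 1 := hm'.1 b (by simp)
      have hb2 : b % q ≤ b := Nat.mod_le b q
      have heq : (b + q) :: t = (q - 1) :: m := hm'eq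
      have := List.head_eq_of_cons_eq heq
      omega

end Padovan15

/-- Fix `q ≥ 2` and let `p` be the generalized Padovan sequence
(fundamental recurrence of `x^q − x − 1`).  For every `n ≥ 1`, `p_n` equals the number of
compositions of `n` all of whose parts are congruent to `q−1` modulo `q`. -/
theorem padovan_compositions_qsub1_mod_q
    (q : ℕ) (hq : 2 ≤ q) (p : ℕ → ℕ)
    (hp0 : ∀ k, k < q - 1 → p k = 0)
    (hp1 : p (q - 1) = 1)
    (hprec : ∀ n, p (n + q) = p (n + 1) + p n)
    (n : ℕ) (hn : 1 ≤ n) :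
    p n = {l : List ℕ | (∀ x ∈ l, x % q = q - 1) ∧ l.sum = n}.ncard := by
  have main : ∀ m, 1 ≤ m → p m = (Padovan15.Cset q m).ncard := by
    intro m
    induction m using Nat.strong_induction_on with
    | _ m ih =>
      intro hm
      rcases lt_trichotomy m (q - 1) with h | h | h
      · rw [hp0 m h, Padovan15.Cset_empty hm h, Set.ncard_empty]
      · subst h
        rw [hp1, Padovan15.Cset_singleton hq, Set.ncard_singleton]
      · rcases eq_or_lt_of_le (show q ≤ m by omega) with heq | hlt
        · have h0 : p 0 = 0 := hp0 0 (by omega)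
          have hr := hprec 0
          rw [zero_add] at hr
          have h1 : p 1 = (Padovan15.Cset q 1).ncard := ih 1 (by omega) le_rfl
          rw [← heq, hr, h0, h1, Padovan15.Cset_keyq hq,
            Set.ncard_image_of_injOn (Set.injOn_of_injective List.cons_injective), add_zero]
        · obtain ⟨k, rfl⟩ : ∃ k, m = k + q := ⟨m - q, by omega⟩
          have hk : 1 ≤ k := by omega
          rw [hprec k, ih (k + 1) (by omega) (by omega), ih k (by omega) hk,
              Padovan15.ncard_key hq hk]
  exact main n hn
end

section
/- For every integer n ≥ 1, p_n = c_{n+1}(parts ≡ 1 (mod q−1) and ≠ 1), i.e., p_n equals the number of compositions of n + 1 all of whose parts are congruent to 1 modulo q−1 and different from 1. -/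
namespace PadComp

def Lset (q m : ℕ) : Set (List ℕ) :=
  {l : List ℕ | (∀ x ∈ l, 0 < x ∧ x % (q - 1) = 1 % (q - 1) ∧ x ≠ 1) ∧ l.sum = m}

lemma finite_L (q m : ℕ) : (Lset q m).Finite := by
  apply Set.Finite.subset (Set.finite_range (fun c : Composition m => c.blocks))
  rintro l ⟨h1, h2⟩
  exact ⟨⟨l, fun {x} hx => (h1 x hx).1, h2⟩, rfl⟩

lemma mod_iff (q x : ℕ) (hx : 1 ≤ x) :
    x % (q - 1) = 1 % (q - 1) ↔ (q - 1) ∣ (x - 1) := by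
  constructor
  · intro h; exact (Nat.modEq_iff_dvd' hx).mp h.symm
  · intro h; exact ((Nat.modEq_iff_dvd' hx).mpr h).symm

lemma q_le (q : ℕ) (hq : 2 ≤ q) {x : ℕ}
    (hx : 0 < x ∧ x % (q - 1) = 1 % (q - 1) ∧ x ≠ 1) : q ≤ x := by
  obtain ⟨h1, h2, h3⟩ := hx
  have hd : (q - 1) ∣ (x - 1) := (mod_iff q x h1).mp h2
  have := Nat.le_of_dvd (by omega) hd
  omega

lemma q_mem (q : ℕ) (hq : 2 ≤ q) :
    0 < q ∧ q % (q - 1) = 1 % (q - 1) ∧ q ≠ 1 :=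
  ⟨by omega, (mod_iff q q (by omega)).mpr dvd_rfl, by omega⟩

lemma L_rec (q : ℕ) (hq : 2 ≤ q) (m : ℕ) :
    (Lset q (m + q)).ncard = (Lset q (m + 1)).ncard + (Lset q m).ncard := by
  classical
  set A : Set (List ℕ) := {l | l ∈ Lset q (m + q) ∧ l.head? = some q} with hAdef
  set B : Set (List ℕ) := {l | l ∈ Lset q (m + q) ∧ l.head? ≠ some q} with hBdef
  have hUnion : Lset q (m + q) = B ∪ A := by
    ext l
    constructor
    · intro hl
      by_cases h : l.head? = some q
      · exact Or.inr ⟨hl, h⟩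
      · exact Or.inl ⟨hl, h⟩
    · rintro (⟨hl, -⟩ | ⟨hl, -⟩) <;> exact hl
  have hdisj : Disjoint B A := by
    rw [Set.disjoint_left]
    rintro l ⟨-, h⟩ ⟨-, h'⟩
    exact h h'
  have finA : A.Finite :=
    (finite_L q (m + q)).subset (fun l hl => hl.1)
  have finB : B.Finite :=
    (finite_L q (m + q)).subset (fun l hl => hl.1)
  have hA : A = (fun t => q :: t) '' Lset q m := by
    ext l
    constructor
    · rintro ⟨⟨hp, hs⟩, hh⟩
      cases l with
      | nil => simp at hh
      | cons a t =>
        have ha : a = q := by simpa using hh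
        refine ⟨t, ⟨fun x hx => hp x (by simp [hx]), ?_⟩, by rw [ha]⟩
        simp only [List.sum_cons] at hs
        omega
    · rintro ⟨t, ⟨hp, hs⟩, rfl⟩
      refine ⟨⟨?_, ?_⟩, rfl⟩
      · intro x hx
        rcases List.mem_cons.mp hx with h | hx
        · rw [h]; exact q_mem q hq
        · exact hp x hx
      · simp [hs]; omega
  have hB : B = (fun t => (t.headI + (q - 1)) :: t.tail) '' Lset q (m + 1) := by
    ext l
    constructor
    · rintro ⟨⟨hp, hs⟩, hh⟩
      cases l with
      | nil => simp at hs; omega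
      | cons a t =>
        have haS := hp a (by simp)
        have haq : q ≤ a := q_le q hq haS
        have hane : a ≠ q := by simpa using hh
        have hsum : a + t.sum = m + q := by simpa using hs
        refine ⟨(a - (q - 1)) :: t, ⟨?_, ?_⟩, ?_⟩
        · intro x hx
          rcases List.mem_cons.mp hx with h | hx
          · subst h
            refine ⟨by omega, ?_, by omega⟩
            have hd : (q - 1) ∣ (a - 1) := (mod_iff q a (by omega)).mp haS.2.1
            refine (mod_iff q (a - (q - 1)) (by omega)).mpr ?_
            have : a - (q - 1) - 1 = (a - 1) - (q - 1) := by omega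
            rw [this]
            exact Nat.dvd_sub hd dvd_rfl
          · exact hp x (by simp [hx])
        · simp only [List.sum_cons]; omega
        · simp only [List.headI, List.tail]
          congr 1
          omega
    · rintro ⟨t, ⟨hp, hs⟩, rfl⟩
      cases t with
      | nil => simp at hs
      | cons b s =>
        have hbS := hp b (by simp)
        have hbq : q ≤ b := q_le q hq hbS
        have hsum : b + s.sum = m + 1 := by simpa using hs
        simp only [List.headI, List.tail]
        refine ⟨⟨?_, ?_⟩, ?_⟩
        · intro x hx
          rcases List.mem_cons.mp hx with h | hx
          · subst h
            refine ⟨by omega, ?_, by omega⟩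
            have hd : (q - 1) ∣ (b - 1) := (mod_iff q b (by omega)).mp hbS.2.1
            refine (mod_iff q (b + (q - 1)) (by omega)).mpr ?_
            have : b + (q - 1) - 1 = (b - 1) + (q - 1) := by omega
            rw [this]
            exact Nat.dvd_add hd dvd_rfl
          · exact hp x (by simp [hx])
        · simp only [List.sum_cons]; omega
        · simp only [List.head?, ne_eq, Option.some.injEq]
          omega
  have hinjB : Set.InjOn (fun t => (t.headI + (q - 1)) :: t.tail) (Lset q (m + 1)) := by
    rintro l1 ⟨-, hs1⟩ l2 ⟨-, hs2⟩ heq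
    cases l1 with
    | nil => simp at hs1
    | cons a t =>
      cases l2 with
      | nil => simp at hs2
      | cons b s =>
        simp only [List.headI, List.tail, List.cons.injEq] at heq
        obtain ⟨h1, h2⟩ := heq
        have : a = b := by omega
        simp [this, h2]
  have hinjA : Function.Injective (fun t : List ℕ => q :: t) := by
    intro t1 t2 h
    simpa using h
  rw [hUnion, Set.ncard_union_eq hdisj finB finA, hA, hB,
    Set.ncard_image_of_injOn hinjB, Set.ncard_image_of_injective _ hinjA]

theorem key (q : ℕ) (hq : 2 ≤ q) (p : ℕ → ℕ)
    (hp0 : ∀ k, k < q - 1 → p k = 0)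
    (hp1 : p (q - 1) = 1)
    (hprec : ∀ n, p (n + q) = p (n + 1) + p n)
    (n : ℕ) : p n = (Lset q (n + 1)).ncard := by
  induction n using Nat.strong_induction_on with
  | _ n ih =>
    rcases lt_trichotomy n (q - 1) with h | h | h
    · rw [hp0 n h]
      symm
      rw [Set.ncard_eq_zero (finite_L q (n + 1))]
      ext l
      simp only [Set.mem_empty_iff_false, iff_false]
      rintro ⟨hp', hs⟩
      cases l with
      | nil => simp at hs
      | cons a t =>
        have := q_le q hq (hp' a (by simp))
        have : a + t.sum = n + 1 := by simpa using hs
        omega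
    · rw [h, hp1]
      symm
      rw [Set.ncard_eq_one]
      refine ⟨[q], ?_⟩
      ext l
      constructor
      · rintro ⟨hp', hs⟩
        cases l with
        | nil => simp at hs
        | cons a t =>
          have haq := q_le q hq (hp' a (by simp))
          have hsum : a + t.sum = q - 1 + 1 := by simpa using hs
          have ht : t = [] := by
            cases t with
            | nil => rfl
            | cons b s =>
              have := q_le q hq (hp' b (by simp))
              simp only [List.sum_cons] at hsum
              omega
          subst ht
          simp only [List.sum_nil] at hsum
          have : a = q := by omega
          simp [this]
      · rintro rfl
        exact ⟨fun x hx => by simp at hx; rw [hx]; exact q_mem q hq,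
          by simp; omega⟩
    · obtain ⟨m, rfl⟩ : ∃ m, n = m + q := ⟨n - q, by omega⟩
      rw [hprec m, ih (m + 1) (by omega), ih m (by omega),
        show m + q + 1 = (m + 1) + q by ring, L_rec q hq (m + 1)]

end PadComp

/-- Fix `q ≥ 2` and let `p` be the generalized Padovan sequence
(fundamental recurrence of `x^q − x − 1`).  For every `n ≥ 1`, `p_n` equals the number of
compositions of `n + 1` all of whose (positive) parts are congruent to `1` modulo `q−1`
and different from `1`. -/
theorem padovan_compositions_one_mod_qsub1_ne_one
    (q : ℕ) (hq : 2 ≤ q) (p : ℕ → ℕ)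
    (hp0 : ∀ k, k < q - 1 → p k = 0)
    (hp1 : p (q - 1) = 1)
    (hprec : ∀ n, p (n + q) = p (n + 1) + p n)
    (n : ℕ) (hn : 1 ≤ n) :
    p n = {l : List ℕ |
      (∀ x ∈ l, 0 < x ∧ x % (q - 1) = 1 % (q - 1) ∧ x ≠ 1) ∧ l.sum = n + 1}.ncard := by
  exact PadComp.key q hq p hp0 hp1 hprec n
end

section
/- Let U : ℕ → ℕ be defined by U_0 = 0, U_i = 2^{i−1} for 1 ≤ i ≤ q−1, and U_{n+q} = U_{n+q−1} + U_{n+q−2} + ⋯ + U_n for all n ≥ 0. Then for every integer n ≥ 1, U_n = c_n(parts ≢ 0 (mod q)), i.e., U_n equals the number of compositions of n all of whose parts are not divisible by q. -/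
/-!
Let `c n` be the number of compositions of `n` with no part divisible by `q`. Removing the
first part gives `c n = ∑_{k < n, q ∤ n - k} c k` for `n ≠ 0`. Compare this at `n + q` and
at `n`: the remainders `k < n` occur in both, as `n + q - k ≡ n - k [MOD q]`, and among
`n ≤ k < n + q` only `k = n` is excluded, so `c (n + q) = c n + ⋯ + c (n + q - 1)`.
At `n = 0` the term `c 0 = 1` is missing, which is why the recurrence is solved by `c` with
`c 0` replaced by `0`, i.e. by `U`. For `0 < i < q` no part of a composition of `i` is
divisible by `q`, so `c i = 2 ^ (i - 1)` and the initial values agree too.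
-/

open Finset

namespace LinearRecurrence

def qbonacci (q : ℕ) : LinearRecurrence ℕ := ⟨q, fun _ => 1⟩

theorem isSolution_qbonacci_iff {q : ℕ} {u : ℕ → ℕ} :
    (qbonacci q).IsSolution u ↔ ∀ n, u (n + q) = ∑ j ∈ range q, u (n + j) := by
  show (∀ n, u (n + q) = ∑ i : Fin q, 1 * u (n + i)) ↔ _
  simp only [one_mul, Finset.sum_range]

end LinearRecurrence

open LinearRecurrence

section Compositions

variable (p : ℕ → Prop) [DecidablePred p]

def compositionsWith : ℕ → Finset (List ℕ)
  | 0 => {[]}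
  | n + 1 => ({k : Fin (n + 1) | p (n + 1 - k)} : Finset _).biUnion fun k =>
      (compositionsWith k).map ⟨List.cons (n + 1 - k), List.cons_injective⟩

variable {p}

theorem nil_mem_compositionsWith {n : ℕ} : [] ∈ compositionsWith p n ↔ n = 0 := by
  cases n <;> simp [compositionsWith]

theorem cons_mem_compositionsWith {n x : ℕ} {l : List ℕ} :
    x :: l ∈ compositionsWith p n ↔
      0 < x ∧ x ≤ n ∧ p x ∧ l ∈ compositionsWith p (n - x) := by
  cases n with
  | zero => simp only [compositionsWith, mem_singleton, reduceCtorEq, false_iff]; omega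
  | succ n =>
    simp only [compositionsWith, mem_biUnion, mem_filter, mem_univ, true_and, mem_map,
      Function.Embedding.coeFn_mk, List.cons.injEq]
    constructor
    · rintro ⟨k, hk, l, hl, rfl, rfl⟩
      refine ⟨by omega, by omega, hk, by rwa [Nat.sub_sub_self k.is_lt.le]⟩
    · rintro ⟨hx, hxn, hpx, hl⟩
      exact ⟨⟨n + 1 - x, by omega⟩, by rwa [Nat.sub_sub_self hxn], l, hl,
        Nat.sub_sub_self hxn, rfl⟩

theorem mem_compositionsWith {n : ℕ} {l : List ℕ} :
    l ∈ compositionsWith p n ↔ (∀ x ∈ l, 0 < x ∧ p x) ∧ l.sum = n := by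
  induction l generalizing n with
  | nil => simp [nil_mem_compositionsWith, eq_comm]
  | cons x l ih =>
    have hsum : (x ≤ n ∧ l.sum = n - x) ↔ x + l.sum = n := by omega
    simp only [cons_mem_compositionsWith, ih, List.forall_mem_cons, List.sum_cons, ← hsum]
    tauto

theorem card_compositionsWith_of_ne_zero {n : ℕ} (hn : n ≠ 0) :
    #(compositionsWith p n) =
      ∑ k ∈ range n, if p (n - k) then #(compositionsWith p k) else 0 := by
  obtain ⟨n, rfl⟩ := Nat.exists_eq_add_one_of_ne_zero hn
  rw [compositionsWith, card_biUnion]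
  · simp only [card_map, sum_filter]
    exact Fin.sum_univ_eq_sum_range
      (fun k => if p (n + 1 - k) then #(compositionsWith p k) else 0) _
  · intro a _ b _ hab
    simp only [Function.onFun, disjoint_left, mem_map, Function.Embedding.coeFn_mk]
    rintro _ ⟨l, -, rfl⟩ ⟨l', -, h⟩
    exact hab (Fin.ext (by have := (List.cons.inj h).1; omega))

theorem coe_compositionsWith (n : ℕ) :
    (compositionsWith p n : Set (List ℕ)) = {l | (∀ x ∈ l, 0 < x ∧ p x) ∧ l.sum = n} :=
  Set.ext fun _ => mem_compositionsWith

theorem card_compositionsWith_of_forall_le {n : ℕ} (h : ∀ k, 0 < k → k ≤ n → p k) :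
    #(compositionsWith p n) = 2 ^ (n - 1) := by
  rw [← composition_card, ← card_univ,
    ← card_map ⟨Composition.blocks, fun _ _ => Composition.ext⟩]
  congr 1
  ext l
  simp only [mem_compositionsWith, mem_map, mem_univ, true_and]
  constructor
  · rintro ⟨hl, rfl⟩
    exact ⟨⟨l, fun hx => (hl _ hx).1, rfl⟩, rfl⟩
  · rintro ⟨c, rfl⟩
    refine ⟨fun x hx => ⟨c.blocks_pos hx, h x (c.blocks_pos hx) ?_⟩, c.blocks_sum⟩
    exact c.blocks_sum ▸ List.le_sum_of_mem hx

end Compositions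

theorem card_compositionsWith_mod_ne_zero_add {q : ℕ} (hq : q ≠ 0) (n : ℕ) :
    #(compositionsWith (· % q ≠ 0) (n + q)) =
      ∑ j ∈ range q, if n + j = 0 then 0 else #(compositionsWith (· % q ≠ 0) (n + j)) := by
  have hbelow :
      (∑ k ∈ range n, if (n + q - k) % q ≠ 0 then #(compositionsWith (· % q ≠ 0) k) else 0)
        = if n = 0 then 0 else #(compositionsWith (· % q ≠ 0) n) := by
    rcases eq_or_ne n 0 with rfl | hn
    · simp
    rw [if_neg hn, card_compositionsWith_of_ne_zero hn]
    refine sum_congr rfl fun k hk => ?_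
    rw [mem_range] at hk
    rw [show n + q - k = n - k + q by omega, Nat.add_mod_right]
  have hwindow : ∀ j ∈ range q,
      (if (n + q - (n + j)) % q ≠ 0 then #(compositionsWith (· % q ≠ 0) (n + j)) else 0)
        = if j = 0 then 0 else #(compositionsWith (· % q ≠ 0) (n + j)) := by
    intro j hj
    rw [mem_range] at hj
    rcases eq_or_ne j 0 with rfl | hj0
    · simp
    rw [if_neg hj0, if_pos (by rw [Nat.mod_eq_of_lt (by omega)]; omega)]
  rw [card_compositionsWith_of_ne_zero (by omega), sum_range_add, hbelow, sum_congr rfl hwindow]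
  obtain ⟨q, rfl⟩ := Nat.exists_eq_add_one_of_ne_zero hq
  simp only [sum_range_succ', add_eq_zero, one_ne_zero, and_false, if_false, add_zero,
    if_true, and_true]
  exact add_comm _ _

/-- Fix `q ≥ 2` and let `U` satisfy `U_0 = 0`, `U_i = 2^{i−1}` for
`1 ≤ i ≤ q−1`, and the generalized tribonacci recursion
`U_{n+q} = U_{n+q−1} + ⋯ + U_n`.  For every `n ≥ 1`, `U_n` equals the number of
compositions of `n` all of whose (positive) parts are not divisible by `q`. -/
theorem tribonacci_compositions_parts_not_div_q
    (q : ℕ) (hq : 2 ≤ q) (U : ℕ → ℕ)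
    (hU0 : U 0 = 0)
    (hUi : ∀ i, 1 ≤ i → i ≤ q - 1 → U i = 2 ^ (i - 1))
    (hUrec : ∀ n, U (n + q) = ∑ j ∈ Finset.range q, U (n + j))
    (n : ℕ) (hn : 1 ≤ n) :
    U n = {l : List ℕ | (∀ x ∈ l, 0 < x ∧ x % q ≠ 0) ∧ l.sum = n}.ncard := by
  let V : ℕ → ℕ := fun m => if m = 0 then 0 else #(compositionsWith (· % q ≠ 0) m)
  have hV : (qbonacci q).IsSolution V := isSolution_qbonacci_iff.2 fun m => by
    dsimp only [V]
    rw [if_neg (by omega)]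
    exact card_compositionsWith_mod_ne_zero_add (by omega) m
  have hUV : U = V := by
    refine ((qbonacci q).eq_iff_eqOn_range_order U V (isSolution_qbonacci_iff.2 hUrec) hV).2 ?_
    intro i hi
    rcases eq_or_ne i 0 with rfl | hi0
    · simp [hU0, V]
    have hiq : i < q := mem_range.1 hi
    dsimp only [V]
    rw [hUi i (by omega) (by omega), if_neg hi0, card_compositionsWith_of_forall_le
      fun k hk hki => by rw [Nat.mod_eq_of_lt (by omega)]; omega]
  rw [hUV, ← coe_compositionsWith, Set.ncard_coe_finset]
  exact if_neg (by omega)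
end

section
/- Set a_k := T_{k+q} for k ≥ 0 (so a_0 = 1, a_1 = 2, and (a_k) is strictly increasing). Then every integer n ≥ 1 has a unique representation n = Σ_{i≥0} ε_i a_i with digits ε_i ∈ {0,1}, all but finitely many zero, such that no q consecutive digits are all equal to 1 (i.e., ε_i + ε_{i+1} + ⋯ + ε_{i+q−1} ≤ q − 1 for every i ≥ 0). -/
/-!
With `a k = T (k + q)`, the recurrence reads `a k = a (k - 1) + ⋯ + a (k - q)`. Call a `0/1`
digit string admissible if it has no `q` consecutive ones. The key inequality is
`∑ i < k, ε i * a i < a k` for admissible `ε`: some digit `ε z = 0` with `k - q ≤ z < k`, so by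
induction on `k` the sum is below `a z + a (z + 1) + ⋯ + a (k - 1) ≤ a k`.
Uniqueness follows by comparing two representations at their highest differing digit. Existence
is the greedy algorithm: if `a k ≤ n < a (k + 1)`, then `n - a k < a k` since
`a (k + 1) ≤ 2 * a k`, and adding the digit `k` to a representation of `n - a k` cannot create `q`
consecutive ones, because these would already sum to `a (k + 1) > n`.
-/

open Finset Function

/-- `a k = a (k - 1) + ⋯ + a (k - q)`, where the indicator stands for the term
`a (-1) = T (q - 1) = 1` of negative index; the other such terms vanish. -/
def IsQBonacci (q : ℕ) (a : ℕ → ℕ) : Prop :=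
  ∀ k, a k = ∑ i ∈ Ico (k - q) k, a i + if k < q then 1 else 0

def IsAdmissible (q : ℕ) (ε : ℕ → ℕ) : Prop :=
  (∀ i, ε i ≤ 1) ∧ ∀ i, ∃ j < q, ε (i + j) = 0

lemma sum_range_le_sub_one_iff {q : ℕ} (hq : 0 < q) {f : ℕ → ℕ} (hf : ∀ j, f j ≤ 1) :
    ∑ j ∈ range q, f j ≤ q - 1 ↔ ∃ j < q, f j = 0 := by
  constructor
  · intro h
    by_contra! hne
    have hones : ∀ j ∈ range q, f j = 1 := fun j hj => by
      have := hf j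
      have := hne j (mem_range.1 hj)
      omega
    rw [sum_congr rfl hones, sum_const, card_range, smul_eq_mul, mul_one] at h
    omega
  · rintro ⟨j, hj, hzero⟩
    have : ∑ j ∈ range q, f j < ∑ _j ∈ range q, 1 :=
      sum_lt_sum (fun j _ => hf j) ⟨j, mem_range.2 hj, by omega⟩
    rw [sum_const, card_range, smul_eq_mul, mul_one] at this
    omega

lemma isAdmissible_iff {q : ℕ} (hq : 0 < q) {ε : ℕ → ℕ} :
    IsAdmissible q ε ↔ (∀ i, ε i ≤ 1) ∧ ∀ i, ∑ j ∈ range q, ε (i + j) ≤ q - 1 :=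
  and_congr_right fun h => forall_congr' fun i =>
    (sum_range_le_sub_one_iff hq fun j => h (i + j)).symm

lemma exists_forall_le_eq_zero {ε : ℕ → ℕ} (h : (support ε).Finite) :
    ∃ N, ∀ i, N ≤ i → ε i = 0 := by
  obtain ⟨M, hM⟩ := h.bddAbove
  refine ⟨M + 1, fun i hi => ?_⟩
  by_contra hne
  have : i ≤ M := hM hne
  omega

lemma finite_support_of_forall_le_eq_zero {ε : ℕ → ℕ} {N : ℕ} (h : ∀ i, N ≤ i → ε i = 0) :
    (support ε).Finite :=
  (Set.finite_Iio N).subset fun i hi => by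
    by_contra hN
    exact hi (h i (not_lt.1 hN))

lemma finsum_mul_eq_sum_range {ε a : ℕ → ℕ} {N : ℕ} (h : ∀ i, N ≤ i → ε i = 0) :
    ∑ᶠ i, ε i * a i = ∑ i ∈ range N, ε i * a i := by
  refine finsum_eq_sum_of_support_subset _ fun i hi => ?_
  by_contra hN
  exact hi (show ε i * a i = 0 by rw [h i (not_lt.1 (by simpa using hN)), zero_mul])

lemma isQBonacci_shift {q : ℕ} {T : ℕ → ℕ} (hT0 : ∀ k, k < q - 1 → T k = 0)
    (hT1 : T (q - 1) = 1) (hTrec : ∀ n, T (n + q) = ∑ j ∈ range q, T (n + j)) :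
    IsQBonacci q (fun k => T (k + q)) := by
  intro k
  show T (k + q) = ∑ i ∈ Ico (k - q) k, T (i + q) + _
  rw [hTrec k]
  rcases lt_or_ge k q with hk | hk
  · obtain ⟨r, rfl⟩ : ∃ r, q = k + r + 1 := ⟨q - k - 1, by omega⟩
    have hzero : ∑ j ∈ range r, T (k + j) = 0 :=
      sum_eq_zero fun j hj => hT0 _ (by have := mem_range.1 hj; omega)
    have hone : T (k + r) = 1 := by simpa using hT1
    rw [if_pos hk, Nat.sub_eq_zero_of_le hk.le, ← range_eq_Ico, show k + r + 1 = r + 1 + k by ring,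
      sum_range_add, sum_range_succ, hzero, hone, zero_add, add_comm]
    exact congrArg _ (sum_congr rfl fun i _ => congrArg T (by ring))
  · rw [if_neg (not_lt.2 hk), add_zero, sum_Ico_eq_sum_range, show k - (k - q) = q by omega]
    exact sum_congr rfl fun j _ => congrArg T (by omega)

namespace IsQBonacci

variable {q : ℕ} {a : ℕ → ℕ}

lemma apply_zero (ha : IsQBonacci q a) (hq : 0 < q) : a 0 = 1 := by
  simpa [hq] using ha 0

lemma sum_Ico_le (ha : IsQBonacci q a) {j k : ℕ} (hj : k - q ≤ j) :
    ∑ i ∈ Ico j k, a i ≤ a k := by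
  rw [ha k]
  exact le_add_right (sum_le_sum_of_subset (Ico_subset_Ico_left hj))

lemma sum_range_lt (ha : IsQBonacci q a) {k : ℕ} (hk : k < q) : ∑ i ∈ range k, a i < a k := by
  rw [ha k, if_pos hk, Nat.sub_eq_zero_of_le hk.le, ← range_eq_Ico]
  omega

lemma le_succ (ha : IsQBonacci q a) (hq : 0 < q) (k : ℕ) : a k ≤ a (k + 1) := by
  simpa using ha.sum_Ico_le (j := k) (k := k + 1) (by omega)

lemma one_le (ha : IsQBonacci q a) (hq : 0 < q) (k : ℕ) : 1 ≤ a k :=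
  ha.apply_zero hq ▸ monotone_nat_of_le_succ (ha.le_succ hq) (Nat.zero_le k)

lemma lt_succ (ha : IsQBonacci q a) (hq : 2 ≤ q) (k : ℕ) : a k < a (k + 1) := by
  cases k with
  | zero =>
    show a 0 < a 1
    have h1 := ha 1
    rw [if_pos (by omega), show 1 - q = 0 by omega, ← range_eq_Ico, sum_range_one] at h1
    omega
  | succ k =>
    have hsum := ha.sum_Ico_le (j := k) (k := k + 1 + 1) (by omega)
    rw [sum_Ico_succ_top (by omega), sum_Ico_succ_top le_rfl, Ico_self, sum_empty] at hsum
    have := ha.one_le (by omega) k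
    omega

lemma strictMono (ha : IsQBonacci q a) (hq : 2 ≤ q) : StrictMono a :=
  strictMono_nat_of_lt_succ (ha.lt_succ hq)

lemma succ_le_two_mul (ha : IsQBonacci q a) (hq : 0 < q) (k : ℕ) : a (k + 1) ≤ 2 * a k := by
  have hsucc := ha (k + 1)
  have hk := ha k
  rw [sum_Ico_succ_top (by omega)] at hsucc
  have hwindow : ∑ i ∈ Ico (k + 1 - q) k, a i ≤ ∑ i ∈ Ico (k - q) k, a i :=
    sum_le_sum_of_subset (Ico_subset_Ico_left (by omega))
  split_ifs at hsucc hk <;> omega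

end IsQBonacci

namespace IsAdmissible

variable {q : ℕ} {a ε δ : ℕ → ℕ}

lemma sum_mul_le (hε : IsAdmissible q ε) (s : Finset ℕ) :
    ∑ i ∈ s, ε i * a i ≤ ∑ i ∈ s, a i :=
  sum_le_sum fun i _ => mul_le_of_le_one_left (Nat.zero_le _) (hε.1 i)

lemma sum_range_mul_lt (ha : IsQBonacci q a) (hε : IsAdmissible q ε) (k : ℕ) :
    ∑ i ∈ range k, ε i * a i < a k := by
  induction k using Nat.strong_induction_on with
  | _ k ih =>
  rcases lt_or_ge k q with hk | hk
  · exact (hε.sum_mul_le _).trans_lt (ha.sum_range_lt hk)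
  obtain ⟨j, hj, hzero⟩ := hε.2 (k - q)
  set z := k - q + j
  calc ∑ i ∈ range k, ε i * a i = ∑ i ∈ range z, ε i * a i + ∑ i ∈ Ico (z + 1) k, ε i * a i := by
        rw [← sum_range_add_sum_Ico _ (show z ≤ k by omega), sum_eq_sum_Ico_succ_bot (by omega),
          hzero, zero_mul, zero_add]
    _ < a z + ∑ i ∈ Ico (z + 1) k, a i :=
        add_lt_add_of_lt_of_le (ih z (by omega)) (hε.sum_mul_le _)
    _ = ∑ i ∈ Ico z k, a i := (sum_eq_sum_Ico_succ_bot (by omega) a).symm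
    _ ≤ a k := ha.sum_Ico_le (by omega)

lemma sum_range_succ_lt_of_lt (ha : IsQBonacci q a) (hε : IsAdmissible q ε) {k : ℕ}
    (h : ε k < δ k) : ∑ i ∈ range (k + 1), ε i * a i < ∑ i ∈ range (k + 1), δ i * a i :=
  calc ∑ i ∈ range (k + 1), ε i * a i = ∑ i ∈ range k, ε i * a i + ε k * a k :=
        sum_range_succ _ _
    _ < a k + ε k * a k := Nat.add_lt_add_right (hε.sum_range_mul_lt ha k) _
    _ = (ε k + 1) * a k := by ring
    _ ≤ δ k * a k := Nat.mul_le_mul_right _ h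
    _ ≤ ∑ i ∈ range (k + 1), δ i * a i := by
        rw [sum_range_succ]
        exact le_add_left le_rfl

lemma eq_of_sum_range_eq (ha : IsQBonacci q a) (hε : IsAdmissible q ε) (hδ : IsAdmissible q δ)
    {k : ℕ} (h : ∑ i ∈ range k, ε i * a i = ∑ i ∈ range k, δ i * a i) : ∀ i < k, ε i = δ i := by
  induction k with
  | zero => simp
  | succ k ih =>
    have hk : ε k = δ k := by
      rcases lt_trichotomy (ε k) (δ k) with hlt | heq | hgt
      · exact absurd h (hε.sum_range_succ_lt_of_lt ha hlt).ne
      · exact heq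
      · exact absurd h (hδ.sum_range_succ_lt_of_lt ha hgt).ne'
    rw [sum_range_succ, sum_range_succ, hk, add_left_inj] at h
    intro i hi
    rcases Nat.lt_succ_iff_lt_or_eq.1 hi with hi | rfl
    exacts [ih h i hi, hk]

lemma eq_of_finsum_eq (ha : IsQBonacci q a) (hε : IsAdmissible q ε) (hδ : IsAdmissible q δ)
    (hεfin : (support ε).Finite) (hδfin : (support δ).Finite)
    (h : ∑ᶠ i, ε i * a i = ∑ᶠ i, δ i * a i) : ε = δ := by
  obtain ⟨M, hM⟩ := exists_forall_le_eq_zero hεfin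
  obtain ⟨N, hN⟩ := exists_forall_le_eq_zero hδfin
  have hεzero : ∀ i, max M N ≤ i → ε i = 0 := fun i hi => hM i (le_of_max_le_left hi)
  have hδzero : ∀ i, max M N ≤ i → δ i = 0 := fun i hi => hN i (le_of_max_le_right hi)
  rw [finsum_mul_eq_sum_range hεzero, finsum_mul_eq_sum_range hδzero] at h
  funext i
  rcases lt_or_ge i (max M N) with hi | hi
  · exact hε.eq_of_sum_range_eq ha hδ h i hi
  · rw [hεzero i hi, hδzero i hi]

lemma update_one (ha : IsQBonacci q a) (hδ : IsAdmissible q δ) {k : ℕ}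
    (hzero : ∀ i, k ≤ i → δ i = 0) (hlt : ∑ i ∈ range k, δ i * a i + a k < a (k + 1)) :
    IsAdmissible q (update δ k 1) := by
  obtain ⟨_, hq, _⟩ := hδ.2 0
  refine ⟨fun i => ?_, fun i => ?_⟩
  · rcases eq_or_ne i k with rfl | hne
    · simp
    · rw [update_of_ne hne]
      exact hδ.1 i
  rcases lt_trichotomy (i + (q - 1)) k with hlt' | heq | hgt
  · obtain ⟨j, hj, hj0⟩ := hδ.2 i
    exact ⟨j, hj, by rw [update_of_ne (by omega)]; exact hj0⟩
  · -- a run of `q` ones ending at `k` would sum to `a (k + 1)`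
    by_contra! hne
    have hones : ∀ p ∈ Ico i k, δ p = 1 := fun p hp => by
      obtain ⟨hip, hpk⟩ := mem_Ico.1 hp
      have := hne (p - i) (by omega)
      rw [show i + (p - i) = p by omega, update_of_ne hpk.ne] at this
      have := hδ.1 p
      omega
    have : a (k + 1) ≤ ∑ i ∈ range k, δ i * a i + a k :=
      calc a (k + 1) = ∑ p ∈ Ico i (k + 1), a p := by
            rw [ha (k + 1), if_neg (by omega), add_zero, show k + 1 - q = i by omega]
        _ = ∑ p ∈ Ico i k, δ p * a p + a k := by
            rw [sum_Ico_succ_top (by omega)]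
            exact congrArg (· + a k) (sum_congr rfl fun p hp => by rw [hones p hp, one_mul])
        _ ≤ ∑ i ∈ range k, δ i * a i + a k :=
            Nat.add_le_add_right (sum_le_sum_of_subset fun p hp => mem_range.2 (mem_Ico.1 hp).2) _
    omega
  · exact ⟨q - 1, by omega, by rw [update_of_ne (by omega)]; exact hzero _ (by omega)⟩

end IsAdmissible

namespace IsQBonacci

variable {q : ℕ} {a : ℕ → ℕ}

lemma exists_isAdmissible_sum_range_eq (ha : IsQBonacci q a) (hq : 0 < q) {n k : ℕ}
    (hn : n < a k) :
    ∃ ε, IsAdmissible q ε ∧ (∀ i, k ≤ i → ε i = 0) ∧ ∑ i ∈ range k, ε i * a i = n := by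
  induction k generalizing n with
  | zero =>
    refine ⟨0, ⟨fun _ => Nat.zero_le _, fun _ => ⟨0, hq, rfl⟩⟩, fun _ _ => rfl, ?_⟩
    have := ha.apply_zero hq
    simp only [range_zero, sum_empty]
    omega
  | succ k ih =>
    rcases lt_or_ge n (a k) with hnk | hkn
    · obtain ⟨ε, hε, hzero, hsum⟩ := ih hnk
      exact ⟨ε, hε, fun i hi => hzero i (by omega),
        by rw [sum_range_succ, hzero k le_rfl, zero_mul, add_zero, hsum]⟩
    · have hrem : n - a k < a k := by
        have := ha.succ_le_two_mul hq k
        omega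
      obtain ⟨δ, hδ, hzero, hsum⟩ := ih hrem
      have hrest : ∑ i ∈ range k, update δ k 1 i * a i = n - a k := by
        rw [← hsum]
        exact sum_congr rfl fun i hi => by rw [update_of_ne (mem_range.1 hi).ne]
      refine ⟨update δ k 1, hδ.update_one ha hzero (by omega), fun i hi => ?_, ?_⟩
      · rw [update_of_ne (by omega)]
        exact hzero i (by omega)
      · rw [sum_range_succ, hrest, update_self, one_mul]
        omega

theorem existsUnique_digits (ha : IsQBonacci q a) (hq : 2 ≤ q) (n : ℕ) :
    ∃! ε : ℕ → ℕ, (support ε).Finite ∧ IsAdmissible q ε ∧ n = ∑ᶠ i, ε i * a i := by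
  have hn : n < a (n + 1) := (Nat.lt_succ_self n).trans_le ((ha.strictMono hq).id_le _)
  obtain ⟨ε, hε, hzero, hsum⟩ := ha.exists_isAdmissible_sum_range_eq (by omega) hn
  have hεfin := finite_support_of_forall_le_eq_zero hzero
  have hεsum : n = ∑ᶠ i, ε i * a i := by rw [finsum_mul_eq_sum_range hzero, hsum]
  refine ⟨ε, ⟨hεfin, hε, hεsum⟩, ?_⟩
  rintro δ ⟨hδfin, hδ, hδsum⟩
  exact hδ.eq_of_finsum_eq ha hε hδfin hεfin (hδsum.symm.trans hεsum)

end IsQBonacci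

theorem tribonacci_q_representation_existsUnique_general
    (q : ℕ) (hq : 2 ≤ q) (T : ℕ → ℕ)
    (hT0 : ∀ k, k < q - 1 → T k = 0)
    (hT1 : T (q - 1) = 1)
    (hTrec : ∀ n, T (n + q) = ∑ j ∈ Finset.range q, T (n + j))
    (n : ℕ) :
    ∃! ε : ℕ → ℕ,
      (Function.support ε).Finite ∧
      (∀ i, ε i ≤ 1) ∧
      (∀ i, ∑ j ∈ Finset.range q, ε (i + j) ≤ q - 1) ∧
      n = ∑ᶠ i, ε i * T (i + q) := by
  simpa only [isAdmissible_iff (by omega : 0 < q), and_assoc] using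
    (isQBonacci_shift hT0 hT1 hTrec).existsUnique_digits hq n

/-- Fix `q ≥ 2`, let `T` be the generalized tribonacci sequence
(fundamental recurrence of `x^q − x^{q−1} − ⋯ − x − 1`), and set `a_k = T_{k+q}`.
Every integer `n ≥ 1` has a unique representation `n = Σᶠ i, ε i * a i` with digits
`ε i ∈ {0,1}`, all but finitely many zero, such that no `q` consecutive digits are all
equal to `1`. -/
theorem tribonacci_q_representation_existsUnique
    (q : ℕ) (hq : 2 ≤ q) (T : ℕ → ℕ)
    (hT0 : ∀ k, k < q - 1 → T k = 0)
    (hT1 : T (q - 1) = 1)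
    (hTrec : ∀ n, T (n + q) = ∑ j ∈ Finset.range q, T (n + j))
    (n : ℕ) (hn : 1 ≤ n) :
    ∃! ε : ℕ → ℕ,
      (Function.support ε).Finite ∧
      (∀ i, ε i ≤ 1) ∧
      (∀ i, ∑ j ∈ Finset.range q, ε (i + j) ≤ q - 1) ∧
      n = ∑ᶠ i, ε i * T (i + q) :=
  tribonacci_q_representation_existsUnique_general q hq T hT0 hT1 hTrec n
end
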